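/- arXiv:1806.11233 — 3 statements merged into one kernel-verified Lean document; each statement's English description precedes it below -/
import Mathlib

section
/- For a permutation $w \in S_\mathbb{Z}$, $w$ is 321-avoiding (there is no triple $i < j < k$ with $w(i) > w(j) > w(k)$) if and only if $w = w_\lambda w_\mu^{-1}$ for some partitions $\mu \subseteq \lambda$, where $w_\lambda$ is the 0-Grassmannian permutation associated to $\lambda$, defined by $w_\lambda(i) = i + \lambda_{1-i}$ for $i \le 0$ and $w_\lambda(i) = i - \lambda'_i$ for $i > 0$ (with $\lambda'$ the conjugate partition), and moreover $\ell(w_\lambda) = \ell(w_\lambda w_\mu^{-1}) + \ell(w_\mu)$. -/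
/-- A permutation of `ℤ` moves only finitely many elements. -/
def FinSupp (w : Equiv.Perm ℤ) : Prop := {i : ℤ | w i ≠ i}.Finite

/-- The Coxeter length of a permutation of `ℤ` = its number of inversions. -/
noncomputable def lenZ (w : Equiv.Perm ℤ) : ℕ :=
  Nat.card {p : ℤ × ℤ | p.1 < p.2 ∧ w p.2 < w p.1}

/-- A partition, recorded by its parts `λ_1 = l 0 ≥ λ_2 = l 1 ≥ ⋯`, eventually zero. -/
def IsPartition (l : ℕ → ℕ) : Prop :=
  (∀ n, l (n + 1) ≤ l n) ∧ ∃ N, ∀ n, N ≤ n → l n = 0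

/-- The conjugate partition: `λ'_k = #{j | λ_j ≥ k}` (parts of `l` indexed from 0). -/
noncomputable def conjPart (l : ℕ → ℕ) (k : ℕ) : ℕ := Nat.card {j : ℕ | k ≤ l j}

/-- `w` is the 0-Grassmannian permutation `w_λ` attached to the partition `l`:
`w_λ(i) = i + λ_{1-i}` for `i ≤ 0` and `w_λ(i) = i - λ'_i` for `i > 0`. -/
def IsGrassPerm (l : ℕ → ℕ) (w : Equiv.Perm ℤ) : Prop :=
  (∀ i : ℤ, i ≤ 0 → w i = i + l (-i).toNat) ∧
  (∀ i : ℤ, 0 < i → w i = i - conjPart l i.toNat)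

/-- `w` is 321-avoiding: no `i < j < k` with `w i > w j > w k`. -/
def Avoids321 (w : Equiv.Perm ℤ) : Prop :=
  ¬ ∃ i j k : ℤ, i < j ∧ j < k ∧ w k < w j ∧ w j < w i

/-!
A finitely supported permutation `v` of `ℤ` that increases on `(-∞, 0]` and on `(0, ∞)` is
exactly some `w_λ`, with `λ_{n+1} = v (-n) + n`. The counting behind this, and behind the
monotonicity properties of 321-avoiding permutations, is one conservation law for a finitely
supported `v`: the points `x ≤ a` with `v x > b` and the points `x > a` with `v x ≤ b` differ in
number by `a - b`.

If `w = w_λ w_μ⁻¹`, every position lies in `w_μ (-∞, 0]` or in `w_μ (0, ∞)`, and `w` increases on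
both, so no three positions are pairwise inverted.

Conversely, a 321-avoiding `w` increases on its weak excedances and on its weak anti-excedances.
Let `A` consist of the strict excedances and the fixed points up to a threshold `c`; as `c` grows
the balance of `A` against `(-∞, 0]` rises in steps of at most one, so some `c` balances it exactly,
and then a Grassmannian `w_μ` maps `(-∞, 0]` increasingly onto `A` and `(0, ∞)` onto its
complement. So `w_λ := w w_μ` is Grassmannian, `μ ⊆ λ` because `A` consists of weak excedances,
and every inversion of `w_μ` crosses from `A` to its complement, where `w` keeps it, so lengths add.
-/

open Equiv Finset

namespace FinSupp

variable {u v : Perm ℤ}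

theorem exists_bound (hv : FinSupp v) : ∃ M, ∀ x, x < -M ∨ M < x → v x = x := by
  obtain ⟨a, ha⟩ := hv.bddAbove
  obtain ⟨b, hb⟩ := hv.bddBelow
  refine ⟨max a (-b), fun x hx => ?_⟩
  by_contra h
  have := ha h
  have := hb h
  omega

theorem of_bound {M : ℤ} (hM : ∀ x, x < -M ∨ M < x → v x = x) : FinSupp v :=
  (Set.finite_Icc (-M) M).subset fun x hx => by
    by_contra h
    exact hx (hM x (by simp only [Set.mem_Icc] at h; omega))

theorem inv (hv : FinSupp v) : FinSupp v⁻¹ :=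
  hv.subset fun _ hi h => hi (Perm.inv_eq_iff_eq.2 h.symm)

theorem mul (hu : FinSupp u) (hv : FinSupp v) : FinSupp (u * v) :=
  (hv.union hu).subset fun x hx => by
    by_contra h
    simp only [Set.mem_union, Set.mem_ofPred_eq, not_or, not_not] at h
    exact hx (by simp [h.1, h.2])

theorem finite_up (hv : FinSupp v) (a b : ℤ) : {x | x ≤ a ∧ b < v x}.Finite := by
  obtain ⟨M, hM⟩ := hv.exists_bound
  refine (Set.finite_Icc (min b (-M)) a).subset fun x ⟨hxa, hbx⟩ => ⟨?_, hxa⟩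
  by_contra h
  have := hM x (by omega)
  omega

theorem finite_down (hv : FinSupp v) (a b : ℤ) : {x | a < x ∧ v x ≤ b}.Finite := by
  obtain ⟨M, hM⟩ := hv.exists_bound
  refine (Set.finite_Icc a (max b M)).subset fun x ⟨hax, hxb⟩ => ⟨hax.le, ?_⟩
  by_contra h
  have := hM x (by omega)
  omega

/-- Compare `(L, a]` with `v⁻¹ (L, b]` for `L` below the support of `v`. -/
theorem ncard_crossing (hv : FinSupp v) (a b : ℤ) :
    ({x | x ≤ a ∧ b < v x}.ncard : ℤ) + b = {x | a < x ∧ v x ≤ b}.ncard + a := by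
  obtain ⟨M, hM⟩ := hv.exists_bound
  set L := min (min a b) (-M) - 1
  have hlt : ∀ x, L < v x ↔ L < x := fun x => by
    by_cases hx : x ≤ L
    · rw [hM x (by omega)]
    · have : ¬ v x ≤ L := fun h => by
        have := v.injective (hM (v x) (by omega))
        omega
      omega
  set I := Ioc L a
  set X := (Ioc L b).map (v⁻¹).toEmbedding
  have hup : {x | x ≤ a ∧ b < v x} = ↑(I \ X) := by
    ext x
    have := hlt x
    simp only [I, X, Set.mem_ofPred_eq, mem_coe, mem_sdiff, mem_map_equiv, mem_Ioc, Perm.inv_def,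
      symm_symm]
    omega
  have hdown : {x | a < x ∧ v x ≤ b} = ↑(X \ I) := by
    ext x
    have := hlt x
    simp only [I, X, Set.mem_ofPred_eq, mem_coe, mem_sdiff, mem_map_equiv, mem_Ioc, Perm.inv_def,
      symm_symm]
    omega
  have hI := card_sdiff_add_card_inter I X
  have hX := card_sdiff_add_card_inter X I
  rw [inter_comm, card_map, Int.card_Ioc] at hX
  rw [Int.card_Ioc] at hI
  rw [hup, hdown, Set.ncard_coe_finset, Set.ncard_coe_finset]
  omega

end FinSupp

namespace Avoids321

variable {w : Perm ℤ}

theorem apply_lt_apply_of_le_apply (hav : Avoids321 w) (hw : FinSupp w) {i j : ℤ} (hij : i < j)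
    (hj : j ≤ w j) : w i < w j := by
  by_contra h
  have hji : w j < w i := lt_of_le_of_ne (not_lt.1 h) (w.injective.ne hij.ne')
  have hdown : {x | j < x ∧ w x ≤ w j} = ∅ := Set.eq_empty_of_forall_notMem fun x ⟨hjx, hx⟩ =>
    hav ⟨i, j, x, hij, hjx, lt_of_le_of_ne hx (w.injective.ne hjx.ne'), hji⟩
  have hup : 0 < {x | x ≤ j ∧ w j < w x}.ncard :=
    (Set.ncard_pos (hw.finite_up j (w j))).2 ⟨i, hij.le, hji⟩
  have := hw.ncard_crossing j (w j)
  rw [hdown, Set.ncard_empty] at this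
  omega

theorem apply_lt_apply_of_apply_le (hav : Avoids321 w) (hw : FinSupp w) {i j : ℤ} (hij : i < j)
    (hi : w i ≤ i) : w i < w j := by
  by_contra h
  have hji : w j < w i := lt_of_le_of_ne (not_lt.1 h) (w.injective.ne hij.ne')
  have hup : {x | x ≤ i - 1 ∧ w i < w x} = ∅ := Set.eq_empty_of_forall_notMem fun x ⟨hxi, hx⟩ =>
    hav ⟨x, i, j, by omega, hij, hji, hx⟩
  have hdown : 2 ≤ {x | i - 1 < x ∧ w x ≤ w i}.ncard := by
    rw [← Set.ncard_pair hij.ne]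
    exact Set.ncard_le_ncard (Set.pair_subset ⟨by omega, le_rfl⟩ ⟨by omega, hji.le⟩)
      (hw.finite_down _ _)
  have := hw.ncard_crossing (i - 1) (w i)
  rw [hup, Set.ncard_empty] at this
  omega

end Avoids321

def IsGrassmannian (v : Perm ℤ) : Prop :=
  StrictMonoOn v (Set.Iic 0) ∧ StrictMonoOn v (Set.Ioi 0)

def shape (v : Perm ℤ) (n : ℕ) : ℕ := (v (-n) + n).toNat

theorem Int.ncard_Ioc (a b : ℤ) : (Set.Ioc a b).ncard = (b - a).toNat := by
  rw [← coe_Ioc, Set.ncard_coe_finset, Int.card_Ioc]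

theorem Int.ncard_Ioo (a b : ℤ) : (Set.Ioo a b).ncard = (b - a - 1).toNat := by
  rw [← coe_Ioo, Set.ncard_coe_finset, Int.card_Ioo]

namespace IsGrassmannian

variable {v : Perm ℤ}

theorem apply_sub_eq_ncard (hg : IsGrassmannian v) (hv : FinSupp v) {x : ℤ} (hx : x ≤ 0) :
    v x - x = {y | x < y ∧ v y ≤ v x}.ncard := by
  have hup : {y | y ≤ x ∧ v x < v y} = ∅ := Set.eq_empty_of_forall_notMem fun y ⟨hyx, hy⟩ =>
    hy.not_ge (hg.1.monotoneOn (hyx.trans hx) hx hyx)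
  have := hv.ncard_crossing x (v x)
  rw [hup, Set.ncard_empty] at this
  omega

theorem sub_apply_eq_ncard (hg : IsGrassmannian v) (hv : FinSupp v) {i : ℤ} (hi : 0 < i) :
    i - v i = {x | x ≤ 0 ∧ v i < v x}.ncard := by
  have hdown : {x | i < x ∧ v x ≤ v i} = ∅ := Set.eq_empty_of_forall_notMem fun x ⟨hix, hx⟩ =>
    hx.not_gt (hg.2 hi (hi.trans hix) hix)
  have hup : {x | x ≤ i ∧ v i < v x} = {x | x ≤ 0 ∧ v i < v x} := by
    ext x
    refine ⟨fun ⟨hxi, hx⟩ => ⟨not_lt.1 fun h => hx.not_ge (hg.2.monotoneOn h hi hxi), hx⟩,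
      fun ⟨hx0, hx⟩ => ⟨hx0.trans hi.le, hx⟩⟩
  have := hv.ncard_crossing i (v i)
  rw [hdown, hup, Set.ncard_empty] at this
  omega

theorem le_apply (hg : IsGrassmannian v) (hv : FinSupp v) {x : ℤ} (hx : x ≤ 0) : x ≤ v x := by
  have := hg.apply_sub_eq_ncard hv hx
  omega

theorem lt_apply_iff (hg : IsGrassmannian v) (hv : FinSupp v) {x i : ℤ} (hx : x ≤ 0) (hi : 0 < i) :
    v i < v x ↔ i ≤ v x - x := by
  rw [hg.apply_sub_eq_ncard hv hx]
  constructor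
  · intro h
    have hsub : Set.Ioc 0 i ⊆ {y | x < y ∧ v y ≤ v x} := fun y ⟨hy0, hyi⟩ =>
      ⟨hx.trans_lt hy0, (hg.2.monotoneOn hy0 hi hyi).trans h.le⟩
    have := Set.ncard_le_ncard hsub (hv.finite_down _ _)
    rw [Int.ncard_Ioc] at this
    omega
  · intro h
    by_contra hle
    have hlt : v x < v i := lt_of_le_of_ne (not_lt.1 hle) (v.injective.ne (by omega))
    have hsub : {y | x < y ∧ v y ≤ v x} ⊆ Set.Ioo 0 i := fun y ⟨hxy, hy⟩ => by
      constructor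
      · by_contra hy0
        exact hy.not_gt (hg.1 hx (not_lt.1 hy0) hxy)
      · by_contra hiy
        have hiy : i ≤ y := not_lt.1 hiy
        exact hy.not_gt (hlt.trans_le (hg.2.monotoneOn hi (hi.trans_le hiy) hiy))
    have := Set.ncard_le_ncard hsub (Set.finite_Ioo 0 i)
    rw [Int.ncard_Ioo] at this
    omega

theorem isPartition_shape (hg : IsGrassmannian v) (hv : FinSupp v) : IsPartition (shape v) := by
  obtain ⟨M, hM⟩ := hv.exists_bound
  refine ⟨fun n => ?_, M.toNat + 1, fun n hn => ?_⟩
  · have := hg.1 (show -((n : ℤ) + 1) ∈ Set.Iic 0 by simp)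
      (show -(n : ℤ) ∈ Set.Iic 0 by simp) (by omega)
    simp only [shape]
    push_cast
    omega
  · have := hM (-n) (by omega)
    simp only [shape]
    omega

theorem isGrassPerm_shape (hg : IsGrassmannian v) (hv : FinSupp v) : IsGrassPerm (shape v) v := by
  refine ⟨fun i hi => ?_, fun i hi => ?_⟩
  · have := hg.le_apply hv hi
    simp only [shape, Int.ofNat_toNat, max_eq_left (neg_nonneg.2 hi), neg_neg]
    omega
  · have himage :
        (fun n : ℕ => -(n : ℤ)) '' {n | i.toNat ≤ shape v n} = {x | x ≤ 0 ∧ v i < v x} := by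
      ext x
      constructor
      · rintro ⟨n, hn, rfl⟩
        simp only [shape, Set.mem_ofPred_eq] at hn
        show -(n : ℤ) ≤ 0 ∧ v i < v (-n)
        exact ⟨by omega, (hg.lt_apply_iff hv (by omega) hi).2 (by omega)⟩
      · rintro ⟨hx, hlt⟩
        have hx' : -((x.natAbs : ℕ) : ℤ) = x := by omega
        refine ⟨x.natAbs, ?_, hx'⟩
        have := (hg.lt_apply_iff hv hx hi).1 hlt
        simp only [shape, Set.mem_ofPred_eq, hx']
        omega
    have := hg.sub_apply_eq_ncard hv hi
    rw [← himage, Set.ncard_image_of_injective _ (fun a b h => by simpa using h)] at this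
    rw [conjPart, Nat.card_coe_set_eq]
    omega

end IsGrassmannian

theorem IsPartition.conjPart_le {l : ℕ → ℕ} (hl : IsPartition l) {k k' : ℕ} (hk : 1 ≤ k)
    (hkk' : k ≤ k') : conjPart l k' ≤ conjPart l k := by
  obtain ⟨N, hN⟩ := hl.2
  have hfin : {j | k ≤ l j}.Finite := (Set.finite_Iio N).subset fun j hj => by
    by_contra h
    have := hN j (not_lt.1 h)
    simp only [Set.mem_ofPred_eq] at hj
    omega
  simp only [conjPart, Nat.card_coe_set_eq]
  exact Set.ncard_le_ncard (fun j (hj : k' ≤ l j) => hkk'.trans hj) hfin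

theorem IsGrassPerm.isGrassmannian {l : ℕ → ℕ} {v : Perm ℤ} (hl : IsPartition l)
    (h : IsGrassPerm l v) : IsGrassmannian v := by
  refine ⟨fun i (hi : i ≤ 0) j (hj : j ≤ 0) hij => ?_, fun i (hi : 0 < i) j (hj : 0 < j) hij => ?_⟩
  · have := antitone_nat_of_succ_le hl.1 (show (-j).toNat ≤ (-i).toNat by omega)
    rw [h.1 i hi, h.1 j hj]
    omega
  · have := hl.conjPart_le (show 1 ≤ i.toNat by omega) (show i.toNat ≤ j.toNat by omega)
    rw [h.2 i hi, h.2 j hj]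
    omega

theorem StrictMonoOn.mul_inv_image {u v : Perm ℤ} {s : Set ℤ} (hu : StrictMonoOn u s)
    (hv : StrictMonoOn v s) : StrictMonoOn ⇑(u * v⁻¹) (v '' s) := by
  rintro _ ⟨x, hx, rfl⟩ _ ⟨y, hy, rfl⟩ hxy
  simpa using hu hx hy ((hv.lt_iff_lt hx hy).1 hxy)

theorem IsGrassmannian.avoids321_mul_inv {u v : Perm ℤ} (hu : IsGrassmannian u)
    (hv : IsGrassmannian v) : Avoids321 (u * v⁻¹) := by
  rintro ⟨i, j, k, hij, hjk, hkj, hji⟩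
  have hpair : ∀ s, StrictMonoOn ⇑(u * v⁻¹) s →
      (i ∈ s → j ∉ s) ∧ (j ∈ s → k ∉ s) ∧ (i ∈ s → k ∉ s) := fun s hs =>
    ⟨fun hi hj => (hs hi hj hij).not_gt hji, fun hj hk => (hs hj hk hjk).not_gt hkj,
      fun hi hk => (hs hi hk (hij.trans hjk)).not_gt (hkj.trans hji)⟩
  have hcover : ∀ p, p ∈ v '' Set.Iic 0 ∨ p ∈ v '' Set.Ioi 0 := fun p =>
    (le_or_gt (v⁻¹ p) 0).imp (fun h => ⟨v⁻¹ p, h, by simp⟩) (fun h => ⟨v⁻¹ p, h, by simp⟩)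
  have := hpair _ (hu.1.mul_inv_image hv.1)
  have := hpair _ (hu.2.mul_inv_image hv.2)
  have := hcover i
  have := hcover j
  have := hcover k
  tauto

def inversions (w : Perm ℤ) : Set (ℤ × ℤ) := {p | p.1 < p.2 ∧ w p.2 < w p.1}

theorem FinSupp.finite_inversions {w : Perm ℤ} (hw : FinSupp w) : (inversions w).Finite := by
  obtain ⟨M, hM⟩ := hw.exists_bound
  have hM' : ∀ x, w x < -M ∨ M < w x → w x = x := fun x hx => w.injective (hM (w x) hx)
  refine ((Set.finite_Icc (-M) M).prod (Set.finite_Icc (-M) M)).subset ?_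
  rintro ⟨i, j⟩ ⟨hij : i < j, hji : w j < w i⟩
  have hi : -M ≤ i := by
    by_contra hi
    have := hM i (by omega)
    have := hM' j (by omega)
    omega
  have hj : j ≤ M := by
    by_contra hj
    have := hM j (by omega)
    have := hM' i (by omega)
    omega
  exact ⟨⟨hi, by omega⟩, by omega, hj⟩

theorem lenZ_mul {u v : Perm ℤ} (hu : (inversions u).Finite) (hv : (inversions v).Finite)
    (h : ∀ i j, i < j → v j < v i → u (v j) < u (v i)) :
    lenZ (u * v) = lenZ u + lenZ v := by
  have hsplit : inversions (u * v) = inversions v ∪ Prod.map ⇑v⁻¹ ⇑v⁻¹ '' inversions u := by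
    ext ⟨i, j⟩
    simp only [inversions, Perm.mul_apply, Set.mem_union, Set.mem_image, Prod.exists,
      Prod.map_apply, Prod.mk.injEq, Set.mem_ofPred_eq]
    constructor
    · rintro ⟨hij, huv⟩
      rcases lt_or_gt_of_ne (v.injective.ne hij.ne') with hv' | hv'
      · exact Or.inl ⟨hij, hv'⟩
      · exact Or.inr ⟨v i, v j, ⟨hv', huv⟩, by simp, by simp⟩
    · rintro (⟨hij, hv'⟩ | ⟨a, b, ⟨hab, hu'⟩, rfl, rfl⟩)
      · exact ⟨hij, h i j hij hv'⟩
      · refine ⟨?_, by simpa using hu'⟩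
        by_contra hle
        have := h _ _ (lt_of_le_of_ne (not_lt.1 hle) ?_) (by simpa using hab)
        · simp only [Perm.coe_inv, apply_symm_apply] at this
          exact this.not_gt hu'
        · exact fun e => hab.ne (by simpa using e.symm)
  have hdisj : Disjoint (inversions v) (Prod.map ⇑v⁻¹ ⇑v⁻¹ '' inversions u) := by
    rw [Set.disjoint_left]
    rintro _ ⟨_, hv'⟩ ⟨⟨a, b⟩, ⟨hab, _⟩, rfl⟩
    simp only [Prod.map_fst, Prod.map_snd, Perm.coe_inv, apply_symm_apply] at hv'
    exact hv'.not_gt hab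
  have hinj : Function.Injective (Prod.map ⇑v⁻¹ ⇑v⁻¹) :=
    (v⁻¹).injective.prodMap (v⁻¹).injective
  simp only [lenZ]
  rw [← inversions, ← inversions, ← inversions, Nat.card_coe_set_eq, Nat.card_coe_set_eq,
    Nat.card_coe_set_eq, hsplit, Set.ncard_union_eq hdisj hv (hu.image _),
    Set.ncard_image_of_injective _ hinj, add_comm]

theorem card_filter_Ioc_add_card_filter_Ioc (p : ℤ → Prop) [DecidablePred p] {a b c : ℤ}
    (hab : a ≤ b) (hbc : b ≤ c) :
    #{x ∈ Ioc a b | p x} + #{x ∈ Ioc b c | p x} = #{x ∈ Ioc a c | p x} := by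
  rw [← Ioc_union_Ioc_eq_Ioc hab hbc, filter_union, card_union_of_disjoint
    (disjoint_filter_filter (Ioc_disjoint_Ioc_of_le le_rfl))]

theorem Function.Injective.surjective_of_eq_self {f : ℤ → ℤ} (hf : Function.Injective f)
    {a b : ℤ} (h : ∀ x, x ≤ a ∨ b < x → f x = x) : Function.Surjective f := by
  have hmaps : Set.MapsTo f (Set.Ioc a b) (Set.Ioc a b) := fun x hx => by
    by_contra hfx
    have := hf (h (f x) (by simp only [Set.mem_Ioc, not_and_or, not_le, not_lt] at hfx; omega))
    rw [this] at hfx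
    exact hfx hx
  have hbij := ((Set.finite_Ioc a b).injOn_iff_bijOn_of_mapsTo hmaps).1 hf.injOn
  intro y
  by_cases hy : y ∈ Set.Ioc a b
  · obtain ⟨x, -, hx⟩ := hbij.surjOn hy
    exact ⟨x, hx⟩
  · exact ⟨y, h y (by simp only [Set.mem_Ioc, not_and_or, not_le, not_lt] at hy; omega)⟩

section Shuffle

variable (A : Set ℤ) [DecidablePred (· ∈ A)] (K : ℤ)

/-- Vanishes iff `A` is the image of `Iic 0` under a permutation supported in `(-K, K]`
(for `A` containing `Iic (-K)` and disjoint from `Ioi K`). -/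
noncomputable def charge : ℤ := #{y ∈ Ioc 0 K | y ∈ A} - #{y ∈ Ioc (-K) 0 | y ∉ A}

/-- Numbers `A` from the top by `0, -1, -2, …` and its complement from the bottom by
`1, 2, 3, …`, both within the window `(-K, K]`. -/
noncomputable def shuffleRank (x : ℤ) : ℤ :=
  if x ∈ A then -#{y ∈ Ioc x K | y ∈ A} else #{y ∈ Ioc (-K) x | y ∉ A}

variable {A K}

theorem shuffleRank_nonpos_iff (hlo : ∀ x ≤ -K, x ∈ A) {x : ℤ} : shuffleRank A K x ≤ 0 ↔ x ∈ A := by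
  unfold shuffleRank
  split_ifs with hx
  · simp [hx]
  · have : x ∈ ({y ∈ Ioc (-K) x | y ∉ A} : Finset ℤ) := by
      simp only [mem_filter, mem_Ioc, le_refl, and_true]
      exact ⟨not_le.1 fun h => hx (hlo x h), hx⟩
    have := card_pos.2 ⟨x, this⟩
    simp only [hx, iff_false, not_le]
    omega

theorem strictMonoOn_shuffleRank (hhi : ∀ x, K < x → x ∉ A) : StrictMonoOn (shuffleRank A K) A := by
  intro x (hx : x ∈ A) y (hy : y ∈ A) hxy
  simp only [shuffleRank, if_pos hx, if_pos hy, neg_lt_neg_iff, Nat.cast_lt]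
  refine card_lt_card ((ssubset_iff_of_subset (filter_subset_filter _ ?_)).2 ⟨y, ?_, ?_⟩)
  · exact Ioc_subset_Ioc_left hxy.le
  · simp only [mem_filter, mem_Ioc]
    exact ⟨⟨hxy, not_lt.1 fun h => hhi y h hy⟩, hy⟩
  · simp

theorem strictMonoOn_compl_shuffleRank (hlo : ∀ x ≤ -K, x ∈ A) :
    StrictMonoOn (shuffleRank A K) Aᶜ := by
  intro x (hx : x ∉ A) y (hy : y ∉ A) hxy
  simp only [shuffleRank, if_neg hx, if_neg hy, Nat.cast_lt]
  refine card_lt_card ((ssubset_iff_of_subset (filter_subset_filter _ ?_)).2 ⟨y, ?_, ?_⟩)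
  · exact Ioc_subset_Ioc_right hxy.le
  · simp only [mem_filter, mem_Ioc, le_refl, and_true]
    exact ⟨not_le.1 fun h => hy (hlo y h), hy⟩
  · simp [hxy]

theorem injective_shuffleRank (hlo : ∀ x ≤ -K, x ∈ A) (hhi : ∀ x, K < x → x ∉ A) :
    Function.Injective (shuffleRank A K) := by
  intro x y hxy
  have hmem : x ∈ A ↔ y ∈ A := by
    rw [← shuffleRank_nonpos_iff hlo, ← shuffleRank_nonpos_iff hlo, hxy]
  by_cases hx : x ∈ A
  · exact (strictMonoOn_shuffleRank hhi).injOn hx (hmem.1 hx) hxy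
  · exact (strictMonoOn_compl_shuffleRank hlo).injOn hx (mt hmem.2 hx) hxy

theorem shuffleRank_eq_self (hlo : ∀ x ≤ -K, x ∈ A) (hhi : ∀ x, K < x → x ∉ A)
    (hbal : charge A K = 0) {x : ℤ} (hx : x ≤ -K ∨ K < x) :
    shuffleRank A K x = x := by
  have hK : 0 ≤ K := by
    by_contra h
    exact hhi (K + 1) (by omega) (hlo (K + 1) (by omega))
  have hpos := card_filter_add_card_filter_not (s := Ioc 0 K) (· ∈ A)
  have hneg := card_filter_add_card_filter_not (s := Ioc (-K) 0) (· ∈ A)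
  rw [Int.card_Ioc] at hpos hneg
  unfold charge at hbal
  rcases hx with hx | hx
  · have hin : {y ∈ Ioc x (-K) | y ∈ A} = Ioc x (-K) :=
      filter_true_of_mem fun y hy => hlo y (mem_Ioc.1 hy).2
    have h₁ := card_filter_Ioc_add_card_filter_Ioc (· ∈ A) hx (by omega : -K ≤ 0)
    have h₂ := card_filter_Ioc_add_card_filter_Ioc (· ∈ A) (by omega : x ≤ 0) hK
    rw [hin, Int.card_Ioc] at h₁
    simp only [shuffleRank, if_pos (hlo x hx)]
    omega
  · have hout : {y ∈ Ioc K x | y ∉ A} = Ioc K x :=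
      filter_true_of_mem fun y hy => hhi y (mem_Ioc.1 hy).1
    have h₁ := card_filter_Ioc_add_card_filter_Ioc (· ∉ A) (by omega : -K ≤ 0) hK
    have h₂ := card_filter_Ioc_add_card_filter_Ioc (· ∉ A) (by omega : -K ≤ K) hx.le
    rw [hout, Int.card_Ioc] at h₂
    simp only [shuffleRank, if_neg (hhi x hx)]
    omega

theorem exists_isGrassmannian_apply_mem_iff (hlo : ∀ x ≤ -K, x ∈ A) (hhi : ∀ x, K < x → x ∉ A)
    (hbal : charge A K = 0) :
    ∃ g : Perm ℤ, FinSupp g ∧ IsGrassmannian g ∧ ∀ i, g i ∈ A ↔ i ≤ 0 := by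
  have hfix : ∀ x, x ≤ -K ∨ K < x → shuffleRank A K x = x :=
    fun x => shuffleRank_eq_self hlo hhi hbal
  have hinj := injective_shuffleRank hlo hhi
  set r := Equiv.ofBijective _ ⟨hinj, hinj.surjective_of_eq_self hfix⟩
  have hr : ∀ i, shuffleRank A K (r.symm i) = i := r.apply_symm_apply
  have hmem : ∀ i, r.symm i ∈ A ↔ i ≤ 0 := fun i => by
    rw [← shuffleRank_nonpos_iff hlo, hr]
  refine ⟨r.symm, (FinSupp.of_bound (M := K) fun x hx => hfix x (by omega)).inv, ⟨?_, ?_⟩, hmem⟩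
  · intro i (hi : i ≤ 0) j (hj : j ≤ 0) hij
    rw [← (strictMonoOn_shuffleRank hhi).lt_iff_lt ((hmem i).2 hi) ((hmem j).2 hj), hr, hr]
    exact hij
  · intro i (hi : 0 < i) j (hj : 0 < j) hij
    rw [← (strictMonoOn_compl_shuffleRank hlo).lt_iff_lt
      (fun h => by have := (hmem i).1 h; omega) (fun h => by have := (hmem j).1 h; omega), hr, hr]
    exact hij

end Shuffle

theorem charge_le_charge_add_one {A B : Set ℤ} [DecidablePred (· ∈ A)] [DecidablePred (· ∈ B)]
    {K x : ℤ} (hAB : A ⊆ B) (hBA : B ⊆ insert x A) : charge B K ≤ charge A K + 1 := by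
  have hsub : ∀ s : Finset ℤ, x ∉ s → ({y ∈ s | y ∈ B} = {y ∈ s | y ∈ A}) := fun s hx => by
    ext y
    simp only [mem_filter, and_congr_right_iff]
    intro hy
    exact ⟨fun h => (hBA h).resolve_left (ne_of_mem_of_not_mem hy hx), fun h => hAB h⟩
  unfold charge
  by_cases hx : 0 < x
  · have hB : {y ∈ Ioc 0 K | y ∈ B} ⊆ insert x {y ∈ Ioc 0 K | y ∈ A} := fun y hy => by
      simp only [mem_filter] at hy
      rcases hBA hy.2 with rfl | h
      · exact mem_insert_self _ _
      · exact mem_insert_of_mem (mem_filter.2 ⟨hy.1, h⟩)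
    have := (card_le_card hB).trans (card_insert_le _ _)
    have hneg : {y ∈ Ioc (-K) 0 | y ∉ B} = {y ∈ Ioc (-K) 0 | y ∉ A} := by
      rw [filter_not, filter_not, hsub _ fun h => by have := (mem_Ioc.1 h).2; omega]
    rw [hneg]
    omega
  · have hA : {y ∈ Ioc (-K) 0 | y ∉ A} ⊆ insert x {y ∈ Ioc (-K) 0 | y ∉ B} := fun y hy => by
      simp only [mem_filter] at hy
      by_cases hyx : y = x
      · exact hyx ▸ mem_insert_self _ _
      · exact mem_insert_of_mem (mem_filter.2 ⟨hy.1, fun h => hy.2 ((hBA h).resolve_left hyx)⟩)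
    have := (card_le_card hA).trans (card_insert_le _ _)
    rw [hsub _ fun h => by have := (mem_Ioc.1 h).1; omega]
    omega

theorem exists_eq_zero_of_le_add_one {f : ℤ → ℤ} {p q : ℤ} (hpq : p ≤ q) (hp : f p ≤ 0)
    (hq : 0 ≤ f q) (hf : ∀ c, f (c + 1) ≤ f c + 1) : ∃ c, p ≤ c ∧ c ≤ q ∧ f c = 0 := by
  obtain ⟨c, ⟨hpc, hc⟩, hleast⟩ :=
    Int.exists_least_of_bdd (P := fun c => p ≤ c ∧ 0 ≤ f c) ⟨p, fun _ h => h.1⟩ ⟨q, hpq, hq⟩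
  refine ⟨c, hpc, hleast q ⟨hpq, hq⟩, le_antisymm ?_ hc⟩
  rcases hpc.eq_or_lt with rfl | hpc
  · exact hp
  · have := hf (c - 1)
    rw [sub_add_cancel] at this
    have := hleast (c - 1)
    omega

def excedanceCut (w : Perm ℤ) (c : ℤ) : Set ℤ := {i | i < w i ∨ (w i = i ∧ i ≤ c)}

theorem mem_excedanceCut {w : Perm ℤ} {c i : ℤ} :
    i ∈ excedanceCut w c ↔ i < w i ∨ (w i = i ∧ i ≤ c) := Iff.rfl

instance (w : Perm ℤ) (c : ℤ) : DecidablePred (· ∈ excedanceCut w c) :=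
  fun i => inferInstanceAs (Decidable (i < w i ∨ (w i = i ∧ i ≤ c)))

section ExcedanceCut

variable {w : Perm ℤ} {N : ℤ}

theorem charge_excedanceCut_neg_nonpos (hN : 0 ≤ N) (hfix : ∀ x, x < -N ∨ N < x → w x = x) :
    charge (excedanceCut w (-(2 * N + 1))) (2 * N + 1) ≤ 0 := by
  have h₁ : {y ∈ Ioc 0 (2 * N + 1) | y ∈ excedanceCut w (-(2 * N + 1))} ⊆ Ioc 0 N :=
    fun y hy => by
      simp only [mem_filter, mem_Ioc, mem_excedanceCut] at hy ⊢
      have := hfix y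
      omega
  have h₂ : Ioo (-(2 * N + 1)) (-N) ⊆
      {y ∈ Ioc (-(2 * N + 1)) 0 | y ∉ excedanceCut w (-(2 * N + 1))} := fun y hy => by
    simp only [mem_filter, mem_Ioc, mem_Ioo, mem_excedanceCut] at hy ⊢
    have := hfix y
    omega
  have c₁ := (card_le_card h₁).trans_eq (Int.card_Ioc _ _)
  have c₂ := (Int.card_Ioo _ _).symm.trans_le (card_le_card h₂)
  unfold charge
  omega

theorem charge_excedanceCut_nonneg (hN : 0 ≤ N) (hfix : ∀ x, x < -N ∨ N < x → w x = x) :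
    0 ≤ charge (excedanceCut w (2 * N + 1)) (2 * N + 1) := by
  have h₁ : Ioc N (2 * N + 1) ⊆ {y ∈ Ioc 0 (2 * N + 1) | y ∈ excedanceCut w (2 * N + 1)} :=
    fun y hy => by
      simp only [mem_filter, mem_Ioc, mem_excedanceCut] at hy ⊢
      have := hfix y
      omega
  have h₂ : {y ∈ Ioc (-(2 * N + 1)) 0 | y ∉ excedanceCut w (2 * N + 1)} ⊆ Icc (-N) 0 :=
    fun y hy => by
      simp only [mem_filter, mem_Ioc, mem_Icc, mem_excedanceCut] at hy ⊢
      have := hfix y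
      omega
  have c₁ := (Int.card_Ioc _ _).symm.trans_le (card_le_card h₁)
  have c₂ := (card_le_card h₂).trans_eq (Int.card_Icc _ _)
  unfold charge
  omega

end ExcedanceCut

theorem FinSupp.exists_charge_excedanceCut_eq_zero {w : Perm ℤ} (hw : FinSupp w) :
    ∃ K c, (∀ x ≤ -K, x ∈ excedanceCut w c) ∧ (∀ x, K < x → x ∉ excedanceCut w c) ∧
      charge (excedanceCut w c) K = 0 := by
  obtain ⟨M, hM⟩ := hw.exists_bound
  obtain ⟨N, hN, hfix⟩ : ∃ N, 0 ≤ N ∧ ∀ x, x < -N ∨ N < x → w x = x :=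
    ⟨max M 0, by omega, fun x hx => hM x (by omega)⟩
  have hstep : ∀ c, charge (excedanceCut w (c + 1)) (2 * N + 1) ≤
      charge (excedanceCut w c) (2 * N + 1) + 1 := fun c =>
    charge_le_charge_add_one (x := c + 1)
      (fun y hy => by simp only [mem_excedanceCut] at hy ⊢; omega)
      (fun y hy => by simp only [mem_excedanceCut, Set.mem_insert_iff] at hy ⊢; omega)
  obtain ⟨c, hKc, hcK, hc⟩ := exists_eq_zero_of_le_add_one
    (f := fun c => charge (excedanceCut w c) (2 * N + 1)) (by omega : -(2 * N + 1) ≤ 2 * N + 1)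
    (charge_excedanceCut_neg_nonpos hN hfix) (charge_excedanceCut_nonneg hN hfix) hstep
  refine ⟨2 * N + 1, c, fun x hx => ?_, fun x hx => ?_, hc⟩ <;>
  · have := hfix x
    simp only [mem_excedanceCut]
    omega

theorem Avoids321.exists_isGrassmannian_mul_inv {w : Perm ℤ} (hav : Avoids321 w)
    (hw : FinSupp w) :
    ∃ u v : Perm ℤ, FinSupp u ∧ FinSupp v ∧ IsGrassmannian u ∧ IsGrassmannian v ∧
      (∀ i ≤ 0, v i ≤ u i) ∧ w = u * v⁻¹ ∧ lenZ u = lenZ w + lenZ v := by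
  obtain ⟨K, c, hlo, hhi, hbal⟩ := hw.exists_charge_excedanceCut_eq_zero
  obtain ⟨v, hv, hvg, hvA⟩ := exists_isGrassmannian_apply_mem_iff hlo hhi hbal
  have hle : ∀ i ≤ 0, v i ≤ w (v i) := fun i hi => by
    have := (hvA i).2 hi
    rw [mem_excedanceCut] at this
    omega
  have hge : ∀ i, 0 < i → w (v i) ≤ v i := fun i hi => by
    have := (hvA i).not.2 (by omega)
    rw [mem_excedanceCut] at this
    omega
  refine ⟨w * v, v, hw.mul hv, hv, ⟨fun i hi j hj hij => ?_, fun i hi j hj hij => ?_⟩, hvg,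
    hle, by simp, lenZ_mul hw.finite_inversions hv.finite_inversions fun i j hij hji => ?_⟩
  · exact hav.apply_lt_apply_of_le_apply hw (hvg.1 hi hj hij) (hle j hj)
  · exact hav.apply_lt_apply_of_apply_le hw (hvg.2 hi hj hij) (hge i hi)
  · have hi : i ≤ 0 := not_lt.1 fun hi => hji.not_gt (hvg.2 hi (hi.trans hij) hij)
    have hj : 0 < j := not_le.1 fun hj => hji.not_gt (hvg.1 (hij.le.trans hj) hj hij)
    exact (hge j hj).trans_lt (hji.trans_le (hle i hi))

/-- A finitely supported permutation `w` of `ℤ` is 321-avoiding iff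
`w = w_λ * w_μ⁻¹` for partitions `μ ⊆ λ`, with `ℓ(w_λ) = ℓ(w_λ w_μ⁻¹) + ℓ(w_μ)`. -/
theorem avoids321_iff_skew (w : Equiv.Perm ℤ) (hw : FinSupp w) :
    Avoids321 w ↔
      ∃ (l m : ℕ → ℕ) (wl wm : Equiv.Perm ℤ),
        IsPartition l ∧ IsPartition m ∧ (∀ n, m n ≤ l n) ∧
        IsGrassPerm l wl ∧ IsGrassPerm m wm ∧
        w = wl * wm⁻¹ ∧ lenZ wl = lenZ w + lenZ wm := by
  constructor
  · intro hav
    obtain ⟨u, v, hu, hv, hug, hvg, hvu, hfac, hlen⟩ := hav.exists_isGrassmannian_mul_inv hw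
    refine ⟨shape u, shape v, u, v, hug.isPartition_shape hu, hvg.isPartition_shape hv,
      fun n => ?_, hug.isGrassPerm_shape hu, hvg.isGrassPerm_shape hv, hfac, hlen⟩
    have := hvu (-n) (by simp)
    simp only [shape]
    omega
  · rintro ⟨l, m, wl, wm, hl, hm, -, hgl, hgm, rfl, -⟩
    exact (hgl.isGrassmannian hl).avoids321_mul_inv (hgm.isGrassmannian hm)
end

section
/- The double Schubert polynomial satisfies $\mathfrak{S}_w(x; a) = \sum_{(u,v)} (-1)^{\ell(u)} \mathfrak{S}_{u^{-1}}(a)\, \mathfrak{S}_v(x)$ for $w \in S_+$, where the sum is over length-additive factorizations $w = uv$ with $\ell(w) = \ell(u) + \ell(v)$. -/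
open MvPolynomial

/-- The group `S₊` of permutations of `ℕ` moving only finitely many elements
(the positive integers are relabeled `0, 1, 2, …`). -/
def SPlus : Subgroup (Equiv.Perm ℕ) where
  carrier := {w | {i : ℕ | w i ≠ i}.Finite}
  one_mem' := by
    have h : {i : ℕ | (1 : Equiv.Perm ℕ) i ≠ i} = ∅ := by ext i; simp
    show ({i : ℕ | (1 : Equiv.Perm ℕ) i ≠ i}).Finite
    rw [h]; exact Set.finite_empty
  mul_mem' := by
    intro a b ha hb
    show ({i : ℕ | (a * b) i ≠ i}).Finite
    refine (Set.Finite.union ha hb).subset ?_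
    intro j hj
    simp only [Set.mem_setOf_eq] at hj
    by_contra hc
    simp only [Set.mem_union, Set.mem_setOf_eq, not_or, not_not] at hc
    exact hj (by rw [Equiv.Perm.mul_apply, hc.2, hc.1])
  inv_mem' := by
    intro a ha
    show ({i : ℕ | a⁻¹ i ≠ i}).Finite
    have h : {i : ℕ | a⁻¹ i ≠ i} = {i : ℕ | a i ≠ i} := by
      ext i
      simp only [Set.mem_setOf_eq, ne_eq, Equiv.Perm.inv_eq_iff_eq]
      exact not_congr eq_comm
    rw [h]; exact ha

/-- The simple transposition `s_i = (i, i+1)` as an element of `S₊`. -/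
def sN (i : ℕ) : SPlus :=
  ⟨Equiv.swap i (i + 1), by
    show ({j : ℕ | Equiv.swap i (i + 1) j ≠ j}).Finite
    refine ((Set.finite_singleton (i + 1)).insert i).subset ?_
    intro j hj
    simp only [Set.mem_setOf_eq] at hj
    by_contra hc
    simp only [Set.mem_insert_iff, Set.mem_singleton_iff, not_or] at hc
    exact hj (Equiv.swap_apply_of_ne_of_ne hc.1 hc.2)⟩

/-- Coxeter length = number of inversions. -/
noncomputable def lenS (w : SPlus) : ℕ :=
  Nat.card {p : ℕ × ℕ | p.1 < p.2 ∧ (w : Equiv.Perm ℕ) p.2 < (w : Equiv.Perm ℕ) p.1}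

/-- The defining properties of the family of Schubert polynomials `𝔖_w`, `w ∈ S₊`:
`𝔖_id = 1`; `𝔖_w` is homogeneous of degree `ℓ(w)`; and
`A_i 𝔖_w = 𝔖_{w sᵢ}` if `ℓ(w sᵢ) < ℓ(w)` and `A_i 𝔖_w = 0` otherwise, where the
divided difference relations are expressed via
`(x_i - x_{i+1}) 𝔖_{w sᵢ} = 𝔖_w - s_i 𝔖_w` resp. `s_i 𝔖_w = 𝔖_w`. -/
def SchubertFamily (S : SPlus → MvPolynomial ℕ ℚ) : Prop :=
  S 1 = 1 ∧
  (∀ w : SPlus, (S w).IsHomogeneous (lenS w)) ∧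
  (∀ (w : SPlus) (i : ℕ),
    if lenS (w * sN i) < lenS w then
      (X i - X (i + 1)) * S (w * sN i)
        = S w - rename (fun j => Equiv.swap i (i + 1) j) (S w)
    else rename (fun j => Equiv.swap i (i + 1) j) (S w) = S w)

/-- The ring `ℚ[x; a]` of double Schubert polynomials: the `x`-variables are
indexed by `Sum.inl`, the `a`-variables by `Sum.inr`. -/
abbrev DR := MvPolynomial (ℕ ⊕ ℕ) ℚ

/-- The exchange of `x_i` and `x_{i+1}`. -/
noncomputable def sx (i : ℕ) : DR →ₐ[ℚ] DR :=
  rename (fun v => Equiv.swap (Sum.inl i : ℕ ⊕ ℕ) (Sum.inl (i + 1)) v)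

/-- The exchange of `a_i` and `a_{i+1}`. -/
noncomputable def sa (i : ℕ) : DR →ₐ[ℚ] DR :=
  rename (fun v => Equiv.swap (Sum.inr i : ℕ ⊕ ℕ) (Sum.inr (i + 1)) v)

/-- The substitution setting `x_i = a_i` for all `i`. -/
noncomputable def setXtoA : DR →ₐ[ℚ] DR :=
  rename (Sum.elim Sum.inr Sum.inr)

/-- The defining properties of the family of double Schubert polynomials
`𝔖_w(x; a)`, `w ∈ S₊` (Theorem `thm:double`): `𝔖_id = 1`; `𝔖_w(a; a) = 0` for
`w ≠ id`; and `A_i^x 𝔖_w = 𝔖_{w sᵢ}` if `ℓ(w sᵢ) < ℓ(w)`, `A_i^x 𝔖_w = 0`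
otherwise. -/
def DoubleSchubertFamily (D : SPlus → DR) : Prop :=
  D 1 = 1 ∧
  (∀ w : SPlus, w ≠ 1 → setXtoA (D w) = 0) ∧
  (∀ (w : SPlus) (i : ℕ),
    if lenS (w * sN i) < lenS w then
      (X (Sum.inl i) - X (Sum.inl (i + 1))) * D (w * sN i) = D w - sx i (D w)
    else sx i (D w) = D w)

/-!
Write `E_w = ∑_{w = uv} (-1)^{ℓ(u)} 𝔖_{u⁻¹}(a) 𝔖_v(x)`. Only the factor `𝔖_v(x)` involves `x`,
and reindexing the factorizations by `v ↦ v sᵢ` shows that `E` satisfies the same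
`x`-divided-difference relations as `D`; moreover `E_id = 1`. At `x = a`, `E_w` becomes
`∑ (-1)^{ℓ(u)} 𝔖_{u⁻¹} 𝔖_v`, which vanishes for `w ≠ id`: by induction on `ℓ(w)` and the Leibniz
rule for `sᵢ`, it is invariant under every `sᵢ`, and a homogeneous polynomial of positive degree
in finitely many of infinitely many variables cannot be. So `E` satisfies the characterization of
the double Schubert polynomials, which determines them.
-/

open Equiv

lemma Equiv.Perm.setOf_support_subset_finite {α : Type*} {s : Set α} (hs : s.Finite) :
    {f : Perm α | ∀ a, f a ≠ a → a ∈ s}.Finite := by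
  classical
  have : Finite s := hs.to_subtype
  have hfin : Finite {f : Perm α // ∀ a, a ∉ s → f a = a} :=
    .of_equiv _ (Perm.subtypeEquivSubtypePerm (· ∈ s))
  exact (Set.finite_coe_iff.mp hfin).subset fun f hf a ha => by_contra (ha ∘ hf a)

namespace SPlus

def inversions (w : SPlus) : Set (ℕ × ℕ) :=
  {p | p.1 < p.2 ∧ (w : Perm ℕ) p.2 < (w : Perm ℕ) p.1}

lemma lenS_eq_ncard (w : SPlus) : lenS w = (inversions w).ncard := Nat.card_coe_set_eq _

lemma apply_mem_support {w : SPlus} {k : ℕ} (hk : (w : Perm ℕ) k ≠ k) :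
    (w : Perm ℕ) ((w : Perm ℕ) k) ≠ (w : Perm ℕ) k :=
  fun h => hk ((w : Perm ℕ).injective h)

lemma exists_mem_inversions_le {w : SPlus} {k : ℕ} (hk : (w : Perm ℕ) k ≠ k) :
    ∃ p ∈ inversions w, k ≤ p.2 := by
  -- the largest point `m` moved by `w` gives the inversion `(w⁻¹ m, m)`
  obtain ⟨m, hm, hmax⟩ := Set.exists_max_image _ id w.2 ⟨k, hk⟩
  have hwm : (w : Perm ℕ) m < m :=
    lt_of_le_of_ne (hmax _ (apply_mem_support hm)) hm
  have hm' : (w : Perm ℕ)⁻¹ m ≠ m := fun h => hm (by simpa using congrArg (w : Perm ℕ) h.symm)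
  have hwm' : (w : Perm ℕ)⁻¹ m < m :=
    lt_of_le_of_ne (hmax _ (by simpa [eq_comm] using hm')) hm'
  exact ⟨((w : Perm ℕ)⁻¹ m, m), ⟨hwm', by simpa using hwm⟩, hmax _ hk⟩

lemma inversions_finite (w : SPlus) : (inversions w).Finite := by
  obtain ⟨M, hM⟩ := (w.2 : {k | (w : Perm ℕ) k ≠ k}.Finite).bddAbove
  refine ((Set.finite_Iic M).prod (Set.finite_Iic M)).subset ?_
  rintro ⟨a, b⟩ ⟨hab, hw⟩
  suffices b ≤ M from ⟨by simp only [Set.mem_Iic]; omega, this⟩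
  by_cases hb : (w : Perm ℕ) b = b
  · have ha : (w : Perm ℕ) a ≠ a := fun ha => by simp only at hw; omega
    have := hM (apply_mem_support ha)
    simp only at hw
    omega
  · exact hM hb

lemma inversions_one : inversions 1 = ∅ :=
  Set.eq_empty_of_forall_notMem fun _ hp => lt_asymm hp.1 hp.2

lemma lenS_one : lenS 1 = 0 := by
  rw [lenS_eq_ncard, inversions_one, Set.ncard_empty]

lemma eq_one_of_lenS_eq_zero {w : SPlus} (h : lenS w = 0) : w = 1 := by
  by_contra hw
  obtain ⟨k, hk⟩ : ∃ k, (w : Perm ℕ) k ≠ k := by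
    by_contra! hfix
    exact hw (Subtype.ext (Equiv.ext hfix))
  obtain ⟨p, hp, -⟩ := exists_mem_inversions_le hk
  rw [lenS_eq_ncard, Set.ncard_eq_zero (inversions_finite w)] at h
  simp [h] at hp

/-- A pair `a < b` is an inversion of exactly one of `v`, `uv` iff `v` maps it, reordered, to an
inversion of `u`. -/
lemma lenS_mul_add_two_mul_ncard (u v : SPlus) :
    lenS (u * v) + 2 * (inversions v \ inversions (u * v)).ncard = lenS u + lenS v := by
  set t : Set (ℕ × ℕ) := {q | (v : Perm ℕ)⁻¹ q.2 < (v : Perm ℕ)⁻¹ q.1}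
  have hne : ∀ {a b}, a < b → (u : Perm ℕ) ((v : Perm ℕ) a) ≠ (u : Perm ℕ) ((v : Perm ℕ) b) :=
    fun hab h => hab.ne (by simpa using h)
  have hdiff : inversions v \ inversions (u * v) =
      ((Equiv.prodComm ℕ ℕ).trans ((v : Perm ℕ).prodCongr (v : Perm ℕ))) ⁻¹'
        (inversions u ∩ t) := by
    ext ⟨a, b⟩
    simp only [inversions, t, Set.mem_sdiff, Set.mem_inter_iff, Set.mem_preimage,
      Set.mem_ofPred_eq, Subgroup.coe_mul, Perm.mul_apply, Equiv.trans_apply,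
      Equiv.prodComm_apply, Prod.swap_prod_mk, Equiv.prodCongr_apply, Prod.map_apply,
      Perm.coe_inv, Equiv.symm_apply_apply, not_and, not_lt]
    constructor
    · rintro ⟨⟨hab, hv⟩, huv⟩
      exact ⟨⟨hv, lt_of_le_of_ne (huv hab) (hne hab)⟩, hab⟩
    · rintro ⟨⟨hv, hu⟩, hab⟩
      exact ⟨⟨hab, hv⟩, fun _ => hu.le⟩
  have hdiff' : inversions (u * v) \ inversions v =
      ((v : Perm ℕ).prodCongr (v : Perm ℕ)) ⁻¹' (inversions u \ t) := by
    ext ⟨a, b⟩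
    simp only [inversions, t, Set.mem_sdiff, Set.mem_preimage, Set.mem_ofPred_eq,
      Subgroup.coe_mul, Perm.mul_apply, Equiv.prodCongr_apply, Prod.map_apply,
      Perm.coe_inv, Equiv.symm_apply_apply, not_and, not_lt]
    constructor
    · rintro ⟨⟨hab, huv⟩, hv⟩
      exact ⟨⟨lt_of_le_of_ne (hv hab) (fun h => hab.ne ((v : Perm ℕ).injective h)), huv⟩,
        hab.le⟩
    · rintro ⟨⟨hv, hu⟩, hab⟩
      have hab' : a < b := lt_of_le_of_ne hab (by rintro rfl; exact lt_irrefl _ hv)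
      exact ⟨⟨hab', hu⟩, fun _ => hv.le⟩
  have hcard : ∀ (e : ℕ × ℕ ≃ ℕ × ℕ) (s : Set (ℕ × ℕ)), (e ⁻¹' s).ncard = s.ncard :=
    fun e s => Set.ncard_preimage_of_injective_subset_range e.injective (by simp)
  have h1 := Set.ncard_inter_add_ncard_sdiff_eq_ncard (inversions v) (inversions (u * v))
    (inversions_finite v)
  have h2 := Set.ncard_inter_add_ncard_sdiff_eq_ncard (inversions (u * v)) (inversions v)
    (inversions_finite (u * v))
  have h3 := Set.ncard_inter_add_ncard_sdiff_eq_ncard (inversions u) t (inversions_finite u)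
  rw [hdiff, hcard] at h1 ⊢
  rw [hdiff', hcard, Set.inter_comm] at h2
  rw [lenS_eq_ncard, lenS_eq_ncard, lenS_eq_ncard]
  omega

lemma lenS_mul_le (u v : SPlus) : lenS (u * v) ≤ lenS u + lenS v := by
  have := lenS_mul_add_two_mul_ncard u v
  omega

lemma lenS_inv (w : SPlus) : lenS w⁻¹ = lenS w := by
  have h := lenS_mul_add_two_mul_ncard w w⁻¹
  rw [mul_inv_cancel, lenS_one, inversions_one, Set.sdiff_empty, ← lenS_eq_ncard] at h
  omega

lemma inversions_subset_of_lenS_mul {u v : SPlus} (h : lenS (u * v) = lenS u + lenS v) :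
    inversions v ⊆ inversions (u * v) := by
  have hkey := lenS_mul_add_two_mul_ncard u v
  have hfin := (inversions_finite v).sdiff (t := inversions (u * v))
  rw [← Set.sdiff_eq_empty, ← Set.ncard_eq_zero hfin]
  omega

lemma sN_mul_self (i : ℕ) : sN i * sN i = 1 :=
  Subtype.ext (Equiv.swap_mul_self i (i + 1))

lemma sN_inv (i : ℕ) : (sN i)⁻¹ = sN i :=
  inv_eq_of_mul_eq_one_left (sN_mul_self i)

lemma inversions_sN (i : ℕ) : inversions (sN i) = {(i, i + 1)} := by
  ext ⟨a, b⟩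
  simp only [inversions, sN, Set.mem_ofPred_eq, Set.mem_singleton_iff, Prod.mk.injEq,
    Equiv.swap_apply_def]
  split_ifs <;> omega

lemma lenS_sN (i : ℕ) : lenS (sN i) = 1 := by
  rw [lenS_eq_ncard, inversions_sN, Set.ncard_singleton]

lemma lenS_mul_sN (w : SPlus) (i : ℕ) :
    lenS (w * sN i) = lenS w + 1 ∨ lenS (w * sN i) + 1 = lenS w := by
  have hkey := lenS_mul_add_two_mul_ncard w (sN i)
  have hle : (inversions (sN i) \ inversions (w * sN i)).ncard ≤ 1 := by
    rw [← Set.ncard_singleton (i, i + 1), ← inversions_sN]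
    exact Set.ncard_le_ncard Set.sdiff_subset (inversions_finite _)
  rw [lenS_sN] at hkey
  omega

lemma lenS_mul_sN_of_lt {w : SPlus} {i : ℕ} (h : lenS (w * sN i) < lenS w) :
    lenS (w * sN i) + 1 = lenS w := by
  have := lenS_mul_sN w i
  omega

lemma lenS_sN_mul_of_lt {w : SPlus} {i : ℕ} (h : lenS (sN i * w) < lenS w) :
    lenS (sN i * w) + 1 = lenS w := by
  have e : lenS (w⁻¹ * sN i) = lenS (sN i * w) := by
    rw [← lenS_inv, mul_inv_rev, inv_inv, sN_inv]
  have := @lenS_mul_sN_of_lt w⁻¹ i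
  rw [e, lenS_inv] at this
  exact this h

lemma setOf_factorization_finite (w : SPlus) :
    {p : SPlus × SPlus | w = p.1 * p.2 ∧ lenS w = lenS p.1 + lenS p.2}.Finite := by
  obtain ⟨M, hM⟩ := ((inversions_finite w).image Prod.snd).bddAbove
  have hV : {v : SPlus | ∀ k, (v : Perm ℕ) k ≠ k → k ∈ Set.Iic M}.Finite :=
    (Perm.setOf_support_subset_finite (Set.finite_Iic M)).preimage
      Subtype.coe_injective.injOn
  refine (hV.image fun v => (w * v⁻¹, v)).subset ?_
  rintro ⟨u, v⟩ ⟨rfl, hlen⟩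
  refine ⟨v, fun k hk => ?_, by simp⟩
  obtain ⟨p, hp, hkp⟩ := exists_mem_inversions_le hk
  exact hkp.trans (hM ⟨p, inversions_subset_of_lenS_mul (v := v) hlen hp, rfl⟩)

noncomputable def factorizations (w : SPlus) : Finset (SPlus × SPlus) :=
  (setOf_factorization_finite w).toFinset

lemma mem_factorizations {w : SPlus} {p : SPlus × SPlus} :
    p ∈ factorizations w ↔ w = p.1 * p.2 ∧ lenS w = lenS p.1 + lenS p.2 :=
  Set.Finite.mem_toFinset _

lemma mk_mem_factorizations {w u v : SPlus} :
    (u, v) ∈ factorizations w ↔ w = u * v ∧ lenS w = lenS u + lenS v :=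
  mem_factorizations

lemma factorizations_one : factorizations 1 = {(1, 1)} := by
  ext ⟨u, v⟩
  simp only [mk_mem_factorizations, lenS_one, Finset.mem_singleton, Prod.mk.injEq]
  constructor
  · rintro ⟨h, hlen⟩
    have hu : u = 1 := eq_one_of_lenS_eq_zero (by omega)
    subst hu
    exact ⟨rfl, by simpa using h.symm⟩
  · rintro ⟨rfl, rfl⟩
    simp [lenS_one]

lemma mem_factorizations_mul_sN_of_lt {w u v : SPlus} {i : ℕ}
    (hp : (u, v) ∈ factorizations w) (hv : lenS (v * sN i) < lenS v) :
    lenS (w * sN i) < lenS w ∧ (u, v * sN i) ∈ factorizations (w * sN i) := by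
  obtain ⟨rfl, hlen⟩ := mk_mem_factorizations.1 hp
  have hle := lenS_mul_le u (v * sN i)
  have := lenS_mul_sN_of_lt hv
  rw [← mul_assoc] at hle
  have := lenS_mul_sN (u * v) i
  exact ⟨by omega, mk_mem_factorizations.2 ⟨mul_assoc .., by omega⟩⟩

lemma mem_factorizations_of_mem_factorizations_mul_sN {w u v : SPlus} {i : ℕ}
    (hw : lenS (w * sN i) < lenS w) (hp : (u, v) ∈ factorizations (w * sN i)) :
    (u, v * sN i) ∈ factorizations w ∧ lenS (v * sN i * sN i) < lenS (v * sN i) := by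
  obtain ⟨hwuv, hlen⟩ := mk_mem_factorizations.1 hp
  have hw' : w = u * (v * sN i) := by
    rw [← mul_assoc, ← hwuv, mul_assoc, sN_mul_self, mul_one]
  have hle := lenS_mul_le u (v * sN i)
  have := lenS_mul_sN_of_lt hw
  have := lenS_mul_sN v i
  rw [mul_assoc, sN_mul_self, mul_one]
  rw [← hw'] at hle
  exact ⟨mk_mem_factorizations.2 ⟨hw', by omega⟩, by omega⟩

lemma inv_mem_factorizations_inv {w u v : SPlus} (h : (u, v) ∈ factorizations w) :
    (v⁻¹, u⁻¹) ∈ factorizations w⁻¹ := by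
  obtain ⟨rfl, hlen⟩ := mk_mem_factorizations.1 h
  exact mk_mem_factorizations.2 ⟨mul_inv_rev u v, by simp only [lenS_inv]; omega⟩

section Convolution

variable {R : Type*} [CommRing R]

noncomputable def conv (F G : SPlus → R) (w : SPlus) : R :=
  ∑ p ∈ factorizations w, F p.1 * G p.2

lemma conv_one (F G : SPlus → R) : conv F G 1 = F 1 * G 1 := by
  simp [conv, factorizations_one]

lemma map_conv {R' Φ : Type*} [CommRing R'] [FunLike Φ R R'] [RingHomClass Φ R R'] (φ : Φ)
    (F G : SPlus → R) (w : SPlus) :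
    φ (conv F G w) = conv (fun u => φ (F u)) (fun v => φ (G v)) w := by
  simp [conv, map_sum]

lemma conv_mul_left (c : R) (F G : SPlus → R) (w : SPlus) :
    conv (fun u => c * F u) G w = c * conv F G w := by
  simp only [conv, Finset.mul_sum, mul_assoc]

lemma conv_mul_right (c : R) (F G : SPlus → R) (w : SPlus) :
    conv F (fun v => c * G v) w = c * conv F G w := by
  simp only [conv, Finset.mul_sum, mul_left_comm]

lemma conv_inv (F G : SPlus → R) (w : SPlus) :
    conv F G w⁻¹ = conv (fun v => G v⁻¹) (fun u => F u⁻¹) w := by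
  refine Finset.sum_nbij' (fun p => (p.2⁻¹, p.1⁻¹)) (fun p => (p.2⁻¹, p.1⁻¹)) ?_ ?_ ?_ ?_ ?_
  · rintro ⟨u, v⟩ h
    simpa using inv_mem_factorizations_inv h
  · rintro ⟨u, v⟩ h
    exact inv_mem_factorizations_inv h
  · simp
  · simp
  · simp [mul_comm]

lemma conv_ite_right (F G : SPlus → R) (w : SPlus) (i : ℕ) :
    conv F (fun v => if lenS (v * sN i) < lenS v then G (v * sN i) else 0) w =
      if lenS (w * sN i) < lenS w then conv F G (w * sN i) else 0 := by
  simp only [conv, mul_ite, mul_zero]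
  rw [← Finset.sum_filter]
  split_ifs with hw
  · refine Finset.sum_nbij' (fun p => (p.1, p.2 * sN i)) (fun p => (p.1, p.2 * sN i))
      ?_ ?_ ?_ ?_ ?_
    · rintro ⟨u, v⟩ h
      rw [Finset.mem_filter] at h
      exact (mem_factorizations_mul_sN_of_lt h.1 h.2).2
    · rintro ⟨u, v⟩ h
      exact Finset.mem_filter.2 (mem_factorizations_of_mem_factorizations_mul_sN hw h)
    all_goals simp [mul_assoc, sN_mul_self]
  · refine Finset.sum_eq_zero fun ⟨u, v⟩ h => ?_
    rw [Finset.mem_filter] at h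
    exact absurd (mem_factorizations_mul_sN_of_lt h.1 h.2).1 hw

lemma conv_ite_left (F G : SPlus → R) (w : SPlus) (i : ℕ) :
    conv (fun u => if lenS (sN i * u) < lenS u then F (sN i * u) else 0) G w =
      if lenS (sN i * w) < lenS w then conv F G (sN i * w) else 0 := by
  have hinv : ∀ (F G : SPlus → R) (x : SPlus),
      conv F G x = conv (fun v => G v⁻¹) (fun u => F u⁻¹) x⁻¹ := by
    intro F G x
    rw [← conv_inv, inv_inv]
  have hF : ∀ u : SPlus, sN i * u⁻¹ = (u * sN i)⁻¹ := by simp [sN_inv]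
  rw [hinv, hinv F G]
  simp only [hF, lenS_inv]
  refine (conv_ite_right (fun v => G v⁻¹) (fun u => F u⁻¹) w⁻¹ i).trans ?_
  rw [← lenS_inv (sN i * w), mul_inv_rev, sN_inv, lenS_inv w]

lemma conv_sub_map {Φ : Type*} [FunLike Φ R R] [RingHomClass Φ R R] (σ : Φ)
    (F G : SPlus → R) (w : SPlus) :
    conv F G w - σ (conv F G w) =
      conv (fun u => F u - σ (F u)) G w + conv F (fun v => G v - σ (G v)) w -
        conv (fun u => F u - σ (F u)) (fun v => G v - σ (G v)) w := by
  simp only [conv, map_sum, map_mul, ← Finset.sum_sub_distrib, ← Finset.sum_add_distrib]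
  exact Finset.sum_congr rfl fun _ _ => by ring

lemma conv_sub_map_of_map_eq {Φ : Type*} [FunLike Φ R R] [RingHomClass Φ R R] (σ : Φ)
    {F : SPlus → R} (hF : ∀ u, σ (F u) = F u) (G : SPlus → R) (w : SPlus) :
    conv F G w - σ (conv F G w) = conv F (fun v => G v - σ (G v)) w := by
  simp only [conv, map_sum, map_mul, hF, ← Finset.sum_sub_distrib, mul_sub]

/-- For a Schubert family `S` this is the inverse of `S` under `conv`. -/
noncomputable def signedInv (S : SPlus → R) (u : SPlus) : R := (-1) ^ lenS u * S u⁻¹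

variable {Φ : Type*} [FunLike Φ R R] [RingHomClass Φ R R] {σ : Φ} {δ : R} {S : SPlus → R}
  {i : ℕ}

lemma signedInv_sub_map
    (hS : ∀ v, S v - σ (S v) = δ * if lenS (v * sN i) < lenS v then S (v * sN i) else 0)
    (u : SPlus) :
    signedInv S u - σ (signedInv S u) =
      -δ * if lenS (sN i * u) < lenS u then signedInv S (sN i * u) else 0 := by
  have e : u⁻¹ * sN i = (sN i * u)⁻¹ := by rw [mul_inv_rev, sN_inv]
  simp only [signedInv, map_mul, map_pow, map_neg, map_one, ← mul_sub, hS, e, lenS_inv]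
  split_ifs with h
  · rw [← lenS_sN_mul_of_lt h, pow_succ]
    ring
  · simp

lemma conv_signedInv_sub_map
    (hS : ∀ v, S v - σ (S v) = δ * if lenS (v * sN i) < lenS v then S (v * sN i) else 0)
    (w : SPlus) :
    conv (signedInv S) S w - σ (conv (signedInv S) S w) =
      δ * ((if lenS (w * sN i) < lenS w then conv (signedInv S) S (w * sN i) else 0) -
        (if lenS (sN i * w) < lenS w then conv (signedInv S) S (sN i * w) else 0) +
        δ * if lenS (sN i * w) < lenS w then
          (if lenS (sN i * w * sN i) < lenS (sN i * w) then
            conv (signedInv S) S (sN i * w * sN i) else 0) else 0) := by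
  rw [conv_sub_map]
  simp only [signedInv_sub_map hS, hS]
  rw [conv_mul_left, conv_mul_right, conv_mul_left, conv_mul_right, conv_ite_left,
    conv_ite_right, conv_ite_left, conv_ite_right]
  ring

end Convolution

end SPlus

namespace MvPolynomial

variable {σ R : Type*} [CommSemiring R]

lemma mem_vars_of_rename_swap_eq [DecidableEq σ] {f : MvPolynomial σ R} {a b : σ}
    (h : rename (Equiv.swap a b) f = f) (ha : a ∈ f.vars) : b ∈ f.vars := by
  rw [← h] at ha
  obtain ⟨j, hj, hja⟩ := mem_vars_rename _ _ ha
  rw [Equiv.swap_apply_eq_iff, Equiv.swap_apply_left] at hja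
  exact hja ▸ hj

/-- Invariance spreads `g i ∈ vars f` to all `g (i + n)`, against the finiteness of `vars f`. -/
lemma notMem_vars_of_forall_rename_swap_eq [DecidableEq σ] {g : ℕ → σ}
    (hg : Function.Injective g) {f : MvPolynomial σ R}
    (h : ∀ i, rename (Equiv.swap (g i) (g (i + 1))) f = f) (i : ℕ) : g i ∉ f.vars := by
  intro hi
  have hall : ∀ n, g (i + n) ∈ f.vars := fun n => by
    induction n with
    | zero => exact hi
    | succ n ih => exact mem_vars_of_rename_swap_eq (h (i + n)) ih
  refine Set.infinite_range_of_injective (hg.comp (add_right_injective i)) ?_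
  exact f.vars.finite_toSet.subset (by rintro _ ⟨n, rfl⟩; exact hall n)

lemma eq_zero_of_isHomogeneous_of_vars_eq_empty {f : MvPolynomial σ R} {n : ℕ} (hn : n ≠ 0)
    (hf : f.IsHomogeneous n) (hv : f.vars = ∅) : f = 0 := by
  rw [vars_eq_empty_iff_eq_C.1 hv, hf.coeff_eq_zero (by simpa using hn.symm), C_0]

end MvPolynomial

lemma setXtoA_rename_inl (q : MvPolynomial ℕ ℚ) :
    setXtoA (rename Sum.inl q) = rename Sum.inr q := by
  simp [setXtoA, rename_rename]

lemma setXtoA_rename_inr (q : MvPolynomial ℕ ℚ) :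
    setXtoA (rename Sum.inr q) = rename Sum.inr q := by
  simp [setXtoA, rename_rename]

lemma sx_rename_inr (i : ℕ) (q : MvPolynomial ℕ ℚ) :
    sx i (rename Sum.inr q) = rename Sum.inr q := by
  simp [sx, rename_rename, ← Equiv.Perm.sumCongr_swap_refl, Function.comp_def]

lemma sx_rename_inl (i : ℕ) (q : MvPolynomial ℕ ℚ) :
    sx i (rename Sum.inl q) = rename Sum.inl (rename (fun j => Equiv.swap i (i + 1) j) q) := by
  simp [sx, rename_rename, ← Equiv.Perm.sumCongr_swap_refl, Function.comp_def]

lemma setXtoA_eq_self {f : DR} (h : ∀ i, Sum.inl i ∉ f.vars) : setXtoA f = f := by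
  obtain ⟨q, rfl⟩ := exists_rename_eq_of_vars_subset_range f Sum.inr Sum.inr_injective
    (by rintro (i | j) hv; exacts [absurd hv (h i), ⟨j, rfl⟩])
  simp [setXtoA, rename_rename]

open SPlus

lemma ite_mul_eq_sub_iff {R : Type*} [CommRing R] (p : Prop) [Decidable p] (a b c δ : R) :
    (if p then δ * c = a - b else b = a) ↔ a - b = δ * if p then c else 0 := by
  split_ifs <;> simp [eq_comm, sub_eq_zero]

namespace SchubertFamily

variable {S : SPlus → MvPolynomial ℕ ℚ}

lemma sub_rename_swap (hS : SchubertFamily S) (v : SPlus) (i : ℕ) :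
    S v - rename (fun j => Equiv.swap i (i + 1) j) (S v) =
      (X i - X (i + 1)) * if lenS (v * sN i) < lenS v then S (v * sN i) else 0 :=
  (ite_mul_eq_sub_iff ..).1 (hS.2.2 v i)

lemma isHomogeneous_conv_signedInv (hS : SchubertFamily S) (w : SPlus) :
    (conv (signedInv S) S w).IsHomogeneous (lenS w) := by
  refine IsHomogeneous.sum _ _ _ fun p hp => ?_
  have h := (((isHomogeneous_one ℕ ℚ).neg.pow (lenS p.1)).mul (hS.2.1 p.1⁻¹)).mul (hS.2.1 p.2)
  rwa [zero_mul, zero_add, lenS_inv, ← (mem_factorizations.1 hp).2] at h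

open Classical in
lemma conv_signedInv_self (hS : SchubertFamily S) (w : SPlus) :
    conv (signedInv S) S w = if w = 1 then 1 else 0 := by
  induction hn : lenS w using Nat.strong_induction_on generalizing w with
  | _ n ih =>
  split_ifs with hw
  · simp [hw, conv_one, signedInv, lenS_one, hS.1]
  set C := conv (signedInv S) S
  have hz : ∀ (c : Prop) [Decidable c] (v : SPlus), (c → lenS v < lenS w) → v ≠ 1 →
      (if c then C v else 0) = 0 := fun c _ v hv hv1 =>
    ite_eq_right_iff.2 fun h => by rw [ih _ (hn ▸ hv h) v rfl, if_neg hv1]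
  have hsym : ∀ i, rename (fun j => Equiv.swap i (i + 1) j) (C w) = C w := by
    intro i
    rw [eq_comm, ← sub_eq_zero, conv_signedInv_sub_map (sub_rename_swap hS · i)]
    by_cases hs : w = sN i
    · subst hs
      simp [sN_mul_self, lenS_one, lenS_sN]
    have h1 : w * sN i ≠ 1 := fun h => hs (by simpa [sN_inv] using mul_eq_one_iff_eq_inv.1 h)
    have h2 : sN i * w ≠ 1 := fun h => hs (by simpa [sN_inv] using eq_inv_of_mul_eq_one_right h)
    have h3 : sN i * w * sN i ≠ 1 := fun h => hw (by
      simpa [sN_inv] using eq_inv_of_mul_eq_one_left h)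
    rw [hz _ _ id h1, hz _ _ id h2, ite_eq_right_iff.2 fun d => hz _ _ (·.trans d) h3]
    ring
  refine eq_zero_of_isHomogeneous_of_vars_eq_empty (fun h => hw (eq_one_of_lenS_eq_zero h))
    (isHomogeneous_conv_signedInv hS w) (Finset.eq_empty_of_forall_notMem fun j => ?_)
  exact notMem_vars_of_forall_rename_swap_eq (g := id) Function.injective_id hsym j

lemma doubleSchubertFamily_conv (hS : SchubertFamily S) :
    DoubleSchubertFamily
      (conv (signedInv fun u => rename Sum.inr (S u)) fun v => rename Sum.inl (S v)) := by
  refine ⟨?_, fun w hw => ?_, fun w i => (ite_mul_eq_sub_iff ..).2 ?_⟩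
  · simp [conv_one, signedInv, lenS_one, hS.1]
  · calc _ = rename Sum.inr (conv (signedInv S) S w) := by
          simp only [map_conv, signedInv, map_mul, map_pow, map_neg, map_one,
            setXtoA_rename_inl, setXtoA_rename_inr]
      _ = 0 := by rw [conv_signedInv_self hS, if_neg hw, map_zero]
  · rw [conv_sub_map_of_map_eq (sx i) fun u => by simp [signedInv, sx_rename_inr]]
    simp only [sx_rename_inl, ← map_sub]
    simp only [sub_rename_swap hS, map_mul, map_sub, rename_X, apply_ite (rename _),
      map_zero]
    rw [conv_mul_right]
    exact congrArg (_ * ·) (conv_ite_right _ (fun v => rename Sum.inl (S v)) w i)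

end SchubertFamily

namespace DoubleSchubertFamily

variable {D : SPlus → DR}

lemma sub_sx (hD : DoubleSchubertFamily D) (w : SPlus) (i : ℕ) :
    D w - sx i (D w) =
      (X (Sum.inl i) - X (Sum.inl (i + 1))) *
        if lenS (w * sN i) < lenS w then D (w * sN i) else 0 :=
  (ite_mul_eq_sub_iff ..).1 (hD.2.2 w i)

/-- The divided-difference relations determine `D w` up to a polynomial in `a` alone, and
setting `x = a` then pins it down. -/
lemma unique {D' : SPlus → DR} (hD : DoubleSchubertFamily D) (hD' : DoubleSchubertFamily D') :
    D = D' := by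
  funext w
  induction hn : lenS w using Nat.strong_induction_on generalizing w with
  | _ n ih =>
  rcases eq_or_ne w 1 with rfl | hw
  · rw [hD.1, hD'.1]
  have hsym : ∀ i, sx i (D w - D' w) = D w - D' w := by
    intro i
    have hlow : (if lenS (w * sN i) < lenS w then D (w * sN i) else 0) =
        if lenS (w * sN i) < lenS w then D' (w * sN i) else 0 := by
      split_ifs with h
      exacts [ih _ (hn ▸ h) _ rfl, rfl]
    rw [map_sub]
    linear_combination hD'.sub_sx w i - hD.sub_sx w i -
      (X (Sum.inl i) - X (Sum.inl (i + 1))) * hlow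
  have hfix := setXtoA_eq_self fun i =>
    notMem_vars_of_forall_rename_swap_eq Sum.inl_injective hsym i
  rwa [map_sub, hD.2.1 w hw, hD'.2.1 w hw, sub_zero, eq_comm, sub_eq_zero] at hfix

end DoubleSchubertFamily

/-- `𝔖_w(x; a) = ∑_{w ≐ uv} (-1)^{ℓ(u)} 𝔖_{u⁻¹}(a) 𝔖_v(x)`, the sum being over
length-additive factorizations `w = u v`. -/
theorem doubleSchubert_eq_signed_sum
    (S : SPlus → MvPolynomial ℕ ℚ) (hS : SchubertFamily S)
    (D : SPlus → DR) (hD : DoubleSchubertFamily D) (w : SPlus) :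
    D w = ∑ᶠ p ∈ {p : SPlus × SPlus | w = p.1 * p.2 ∧ lenS w = lenS p.1 + lenS p.2},
        (-1 : DR) ^ lenS p.1 * rename Sum.inr (S p.1⁻¹) * rename Sum.inl (S p.2) := by
  rw [← (setOf_factorization_finite w).coe_toFinset, finsum_mem_coe_finset,
    hD.unique hS.doubleSchubertFamily_conv]
  rfl
end

section
/- Double Schubert polynomials satisfy the vanishing property: for $v, w \in S_n$ with $v \not\le w$ in Bruhat order, the specialization $\mathfrak{S}_v(wa; a) := \mathfrak{S}_v(a_{w(1)}, a_{w(2)}, \ldots; a)$ equals $0$. In particular $\mathfrak{S}_v(a; a) = 0$ for $v \neq \mathrm{id}$. -/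
open MvPolynomial

/-- The underlying function of the longest element `w₀⁽ⁿ⁾` of `Sₙ`. -/
def w0fun (n : ℕ) : ℕ → ℕ := fun i => if i < n then n - 1 - i else i

lemma w0fun_involutive (n : ℕ) : Function.Involutive (w0fun n) := by
  intro i
  unfold w0fun
  by_cases h : i < n
  · rw [if_pos h, if_pos (by omega)]
    omega
  · rw [if_neg h, if_neg h]

/-- The longest element `w₀⁽ⁿ⁾` of `Sₙ` as a permutation. -/
def w0perm (n : ℕ) : Equiv.Perm ℕ :=
  Function.Involutive.toPerm (w0fun n) (w0fun_involutive n)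

/-- The longest element `w₀⁽ⁿ⁾` of `Sₙ` as an element of `S₊`. -/
def w0 (n : ℕ) : SPlus :=
  ⟨w0perm n, by
    show ({j : ℕ | w0perm n j ≠ j}).Finite
    refine (Set.finite_Iio n).subset ?_
    intro j hj
    simp only [Set.mem_setOf_eq] at hj
    by_contra hc
    simp only [Set.mem_Iio, not_lt] at hc
    refine hj ?_
    show w0fun n j = j
    unfold w0fun
    rw [if_neg (by omega)]⟩

/-- The double Schubert polynomials, defined top-down:
`𝔖_{w₀⁽ⁿ⁾}(x; a) = ∏_{i+j ≤ n} (x_i - a_j)` and `𝔖_w = A_i^x 𝔖_{w sᵢ}` whenever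
`ℓ(w sᵢ) > ℓ(w)`. -/
def DoubleSchubertFamily' (D : SPlus → DR) : Prop :=
  (∀ n : ℕ, D (w0 n) =
    ∏ p ∈ (Finset.range n ×ˢ Finset.range n).filter (fun p => p.1 + p.2 + 2 ≤ n),
      (X (Sum.inl p.1) - X (Sum.inr p.2))) ∧
  (∀ (w : SPlus) (i : ℕ), lenS w < lenS (w * sN i) →
    (X (Sum.inl i) - X (Sum.inl (i + 1))) * D w
      = D (w * sN i) - sx i (D (w * sN i)))

/-- The transposition `(i j)` as an element of `S₊`. -/
def swapS (i j : ℕ) : SPlus :=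
  ⟨Equiv.swap i j, by
    show ({k : ℕ | Equiv.swap i j k ≠ k}).Finite
    refine ((Set.finite_singleton j).insert i).subset ?_
    intro k hk
    simp only [Set.mem_setOf_eq] at hk
    by_contra hc
    simp only [Set.mem_insert_iff, Set.mem_singleton_iff, not_or] at hc
    exact hk (Equiv.swap_apply_of_ne_of_ne hc.1 hc.2)⟩

/-- Bruhat order on `S₊`: the reflexive-transitive closure of right
multiplication by a transposition which increases length. -/
def BruhatLe (v w : SPlus) : Prop :=
  Relation.ReflTransGen
    (fun a b : SPlus => lenS a < lenS b ∧ ∃ i j : ℕ, i ≠ j ∧ b = a * swapS i j) v w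

/-- The substitution `x_i ↦ a_{w(i)}`, `a_i ↦ a_i`. -/
noncomputable def specAt (w : SPlus) : DR →ₐ[ℚ] DR :=
  rename (Sum.elim (fun i => Sum.inr ((w : Equiv.Perm ℕ) i)) Sum.inr)

/-!
Descending induction on `ℓ(v)` inside `Sₙ`. For `v = w₀` the factor `x_i - a_{w(i)}` with
`i + w(i) ≤ n - 2` kills the top polynomial at `x = wa` unless `w = w₀`. Otherwise `v` has an
ascent `i`, and the divided-difference relation `(x_i - x_{i+1}) 𝔖_v = 𝔖_{vsᵢ} - sᵢ 𝔖_{vsᵢ}`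
specialized at `x = wa` reads
`(a_{w(i)} - a_{w(i+1)}) 𝔖_v(wa) = 𝔖_{vsᵢ}(wa) - 𝔖_{vsᵢ}(wsᵢa)`,
so `𝔖_v(wa) ≠ 0` gives `vsᵢ ≤ w` or `vsᵢ ≤ wsᵢ`; either way `v ≤ w`, the second case by the
lifting property. Bruhat order is handled through the tableau criterion: `u ≤ w` iff
`#{m < k | u(m) ≥ j} ≤ #{m < k | w(m) ≥ j}` for all `k, j`.
-/

open Finset

def SupportedBelow (n : ℕ) (z : SPlus) : Prop := ∀ k, n ≤ k → z.1 k = k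

lemma sN_eq_swapS (i : ℕ) : sN i = swapS i (i + 1) := rfl

lemma mul_swapS_apply (z : SPlus) (i j k : ℕ) : (z * swapS i j).1 k = z.1 (Equiv.swap i j k) :=
  rfl

lemma mul_swapS_mul_swapS (z : SPlus) (i j : ℕ) : z * swapS i j * swapS i j = z :=
  Subtype.ext (by simp [swapS, mul_assoc])

lemma swapS_comm (i j : ℕ) : swapS i j = swapS j i := Subtype.ext (Equiv.swap_comm i j)

lemma exists_supportedBelow (z : SPlus) : ∃ n, SupportedBelow n z := by
  obtain ⟨N, hN⟩ := (show {i : ℕ | z.1 i ≠ i}.Finite from z.2).bddAbove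
  exact ⟨N + 1, fun k hk => by_contra fun hzk => by have := hN hzk; omega⟩

lemma SupportedBelow.mono {n m : ℕ} {z : SPlus} (h : SupportedBelow n z) (hnm : n ≤ m) :
    SupportedBelow m z :=
  fun k hk => h k (hnm.trans hk)

lemma SupportedBelow.apply_lt {n k : ℕ} {z : SPlus} (h : SupportedBelow n z) (hk : k < n) :
    z.1 k < n := by
  by_contra! hzk
  have := z.1.injective (h _ hzk)
  omega

lemma SupportedBelow.mul_swapS {n i j : ℕ} {z : SPlus} (h : SupportedBelow n z) (hi : i < n)
    (hj : j < n) : SupportedBelow n (z * swapS i j) := fun k hk => by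
  rw [mul_swapS_apply, Equiv.swap_apply_of_ne_of_ne (by omega) (by omega), h k hk]

def inversionsBelow (z : Equiv.Perm ℕ) (n : ℕ) : Finset (ℕ × ℕ) :=
  {e ∈ range n ×ˢ range n | e.1 < e.2 ∧ z e.2 < z e.1}

lemma mem_inversionsBelow {z : Equiv.Perm ℕ} {n : ℕ} {e : ℕ × ℕ} :
    e ∈ inversionsBelow z n ↔ (e.1 < n ∧ e.2 < n) ∧ e.1 < e.2 ∧ z e.2 < z e.1 := by
  simp [inversionsBelow]

lemma lenS_eq_card_inversionsBelow {n : ℕ} {z : SPlus} (h : SupportedBelow n z) :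
    lenS z = #(inversionsBelow z.1 n) := by
  have hset : {p : ℕ × ℕ | p.1 < p.2 ∧ z.1 p.2 < z.1 p.1} = ↑(inversionsBelow z.1 n) := by
    ext ⟨x, y⟩
    simp only [inversionsBelow, coe_filter, mem_product, mem_range, Set.mem_ofPred_eq]
    refine ⟨fun hxy => ⟨⟨?_, ?_⟩, hxy⟩, fun hxy => hxy.2⟩
    all_goals
      by_contra! hn
      have := h y (by omega)
      have := z.1.injective (h _ (show n ≤ z.1 x by omega))
      omega
  rw [lenS, hset, Nat.card_coe_set_eq, Set.ncard_coe_finset]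

lemma lenS_le_mul_self {n : ℕ} {z : SPlus} (h : SupportedBelow n z) : lenS z ≤ n * n := by
  rw [lenS_eq_card_inversionsBelow h]
  exact (card_filter_le _ _).trans_eq (by rw [card_product, card_range])

/-- A pair with one entry in `{p, q}` and the other outside `[p, q]` has that entry exchanged
for the other of `p, q`; all other pairs are fixed. For `z q < z p` this maps the inversions of
`z * swap p q` injectively to inversions of `z` other than `(p, q)`. -/
def swapInversionMap (p q : ℕ) (e : ℕ × ℕ) : ℕ × ℕ :=
  if e.2 = q ∧ e.1 < p then (e.1, p)
  else if e.1 = q then (p, e.2)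
  else if e.1 = p ∧ q < e.2 then (q, e.2)
  else if e.2 = p then (e.1, q)
  else e

lemma swapInversionMap_swapInversionMap {p q x y : ℕ} (hxy : x < y)
    (hne : (x, y) ≠ (p, q)) :
    swapInversionMap p q (swapInversionMap p q (x, y)) = (x, y) := by
  simp only [swapInversionMap, ne_eq, Prod.mk.injEq] at hne ⊢
  split_ifs <;> simp_all

lemma swapInversionMap_mem {p q n : ℕ} {z : Equiv.Perm ℕ} (hpq : p < q) (hqn : q < n)
    (hz : z q < z p) {e : ℕ × ℕ} (he : e ∈ inversionsBelow (z * Equiv.swap p q) n) :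
    swapInversionMap p q e ∈ (inversionsBelow z n).erase (p, q) := by
  obtain ⟨x, y⟩ := e
  rw [mem_inversionsBelow] at he
  obtain ⟨⟨hx, hy⟩, hxy, hinv⟩ := he
  simp only [Equiv.Perm.mul_apply, Equiv.swap_apply_def] at hx hy hxy hinv
  simp only [mem_erase, mem_inversionsBelow, ne_eq, swapInversionMap]
  split_ifs at hinv ⊢ <;> simp_all <;> omega

lemma lenS_mul_swapS_lt {z : SPlus} {p q : ℕ} (hpq : p < q) (h : z.1 q < z.1 p) :
    lenS (z * swapS p q) < lenS z := by
  obtain ⟨n, hn⟩ := exists_supportedBelow z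
  have hzn : SupportedBelow (max n (q + 1)) z := hn.mono (le_max_left _ _)
  have hqn : q < max n (q + 1) := by omega
  rw [lenS_eq_card_inversionsBelow (hzn.mul_swapS (hpq.trans hqn) hqn),
    lenS_eq_card_inversionsBelow hzn]
  have hpq_mem : (p, q) ∈ inversionsBelow z.1 (max n (q + 1)) := by
    rw [mem_inversionsBelow]
    exact ⟨⟨by omega, hqn⟩, hpq, h⟩
  refine lt_of_le_of_lt (card_le_card_of_injOn (swapInversionMap p q)
    (fun e he => swapInversionMap_mem hpq hqn h he) ?_) (card_erase_lt_of_mem hpq_mem)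
  rintro ⟨x₁, y₁⟩ he₁ ⟨x₂, y₂⟩ he₂ heq
  have mem_ne {x y} (he : (x, y) ∈ inversionsBelow (z.1 * Equiv.swap p q) (max n (q + 1))) :
      x < y ∧ (x, y) ≠ (p, q) := by
    rw [mem_inversionsBelow, Equiv.Perm.mul_apply, Equiv.Perm.mul_apply] at he
    refine ⟨he.2.1, ?_⟩
    rintro ⟨rfl, rfl⟩
    simp only [Equiv.swap_apply_left, Equiv.swap_apply_right] at he
    omega
  obtain ⟨h₁, hne₁⟩ := mem_ne he₁
  obtain ⟨h₂, hne₂⟩ := mem_ne he₂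
  rw [← swapInversionMap_swapInversionMap h₁ hne₁, heq,
    swapInversionMap_swapInversionMap h₂ hne₂]

lemma lenS_lt_mul_swapS {z : SPlus} {p q : ℕ} (hpq : p < q) (h : z.1 p < z.1 q) :
    lenS z < lenS (z * swapS p q) := by
  simpa [mul_swapS_mul_swapS] using
    lenS_mul_swapS_lt (z := z * swapS p q) hpq
      (by rwa [mul_swapS_apply, mul_swapS_apply, Equiv.swap_apply_left, Equiv.swap_apply_right])

lemma apply_lt_of_lenS_lt_mul_swapS {z : SPlus} {p q : ℕ} (hpq : p < q)
    (h : lenS z < lenS (z * swapS p q)) : z.1 p < z.1 q := by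
  rcases lt_trichotomy (z.1 p) (z.1 q) with hlt | heq | hgt
  · exact hlt
  · exact absurd (z.1.injective heq) hpq.ne
  · exact absurd (lenS_mul_swapS_lt hpq hgt) h.not_gt

def upperRank (z : Equiv.Perm ℕ) (k j : ℕ) : ℕ := #{m ∈ range k | j ≤ z m}

def upperCount (z : Equiv.Perm ℕ) (a b j : ℕ) : ℕ := #{m ∈ Ico a b | j ≤ z m}

lemma upperRank_succ (z : Equiv.Perm ℕ) (k j : ℕ) :
    upperRank z (k + 1) j = upperRank z k j + if j ≤ z k then 1 else 0 := by
  rw [upperRank, range_add_one, filter_insert]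
  split_ifs
  · rw [card_insert_of_notMem (by simp), upperRank]
  · rw [upperRank, add_zero]

lemma upperRank_congr {z w : Equiv.Perm ℕ} {k : ℕ} (h : ∀ m < k, z m = w m) (j : ℕ) :
    upperRank z k j = upperRank w k j := by
  unfold upperRank
  congr 1
  exact filter_congr fun m hm => by rw [h m (mem_range.mp hm)]

lemma upperRank_add_upperCount (z : Equiv.Perm ℕ) {a b : ℕ} (h : a ≤ b) (j : ℕ) :
    upperRank z b j = upperRank z a j + upperCount z a b j := by
  rw [upperRank, upperRank, upperCount, range_eq_Ico, range_eq_Ico,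
    ← Ico_union_Ico_eq_Ico (Nat.zero_le a) h, filter_union,
    card_union_of_disjoint (disjoint_filter_filter (Ico_disjoint_Ico_consecutive 0 a b))]

lemma upperCount_anti (z : Equiv.Perm ℕ) (a b : ℕ) {j j' : ℕ} (h : j ≤ j') :
    upperCount z a b j' ≤ upperCount z a b j :=
  card_le_card (monotone_filter_right _ fun _ _ hm => h.trans hm)

lemma upperRank_mul_swap {z : Equiv.Perm ℕ} {p q : ℕ} (hpq : p < q) (k j : ℕ) :
    upperRank (z * Equiv.swap p q) k j + (if p < k ∧ k ≤ q ∧ z q < j ∧ j ≤ z p then 1 else 0)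
      = upperRank z k j + (if p < k ∧ k ≤ q ∧ z p < j ∧ j ≤ z q then 1 else 0) := by
  induction k with
  | zero => simp only [upperRank, range_zero, filter_empty, card_empty]; split_ifs <;> omega
  | succ k ih =>
    rw [upperRank_succ, upperRank_succ, Equiv.Perm.mul_apply, Equiv.swap_apply_def]
    split_ifs at ih ⊢ <;> subst_vars <;> omega

lemma upperRank_mul_swap_succ {z : Equiv.Perm ℕ} {i k : ℕ} (hk : k ≠ i + 1) (j : ℕ) :
    upperRank (z * Equiv.swap i (i + 1)) k j = upperRank z k j := by
  have h := upperRank_mul_swap (z := z) (Nat.lt_succ_self i) k j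
  rwa [if_neg (by omega), if_neg (by omega)] at h

def RankLe (u w : Equiv.Perm ℕ) : Prop := ∀ k j, upperRank u k j ≤ upperRank w k j

lemma RankLe.refl (u : Equiv.Perm ℕ) : RankLe u u := fun _ _ => le_rfl

lemma RankLe.trans {u v w : Equiv.Perm ℕ} (huv : RankLe u v) (hvw : RankLe v w) : RankLe u w :=
  fun k j => (huv k j).trans (hvw k j)

lemma rankLe_mul_swap {z : Equiv.Perm ℕ} {p q : ℕ} (hpq : p < q) (h : z p < z q) :
    RankLe z (z * Equiv.swap p q) := fun k j => by
  have := upperRank_mul_swap (z := z) hpq k j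
  split_ifs at this <;> omega

lemma rankLe_of_bruhatLe {u w : SPlus} (h : BruhatLe u w) : RankLe u.1 w.1 := by
  induction h with
  | refl => exact RankLe.refl _
  | tail _ hstep ih =>
    obtain ⟨hlen, i, j, hij, rfl⟩ := hstep
    refine ih.trans ?_
    rcases hij.lt_or_gt with hij | hji
    · exact rankLe_mul_swap hij (apply_lt_of_lenS_lt_mul_swapS hij hlen)
    · rw [swapS_comm] at hlen ⊢
      exact rankLe_mul_swap hji (apply_lt_of_lenS_lt_mul_swapS hji hlen)

/-- The lifting property of Bruhat order, in the form of the tableau criterion. -/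
lemma RankLe.lift {u w : Equiv.Perm ℕ} {i : ℕ} (hu : u (i + 1) < u i)
    (h : RankLe u (w * Equiv.swap i (i + 1))) : RankLe (u * Equiv.swap i (i + 1)) w := by
  intro k j
  by_cases hk : k = i + 1
  · subst hk
    have row_i := h i j
    have row_i2 := h (i + 1 + 1) j
    rw [upperRank_mul_swap_succ (by omega)] at row_i row_i2
    rw [upperRank_succ _ (i + 1), upperRank_succ _ (i + 1), upperRank_succ, upperRank_succ]
      at row_i2
    rw [upperRank_succ, upperRank_succ, Equiv.Perm.mul_apply, Equiv.swap_apply_left,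
      upperRank_mul_swap_succ (by omega)]
    split_ifs at row_i2 ⊢ <;> omega
  · rw [upperRank_mul_swap_succ hk]
    simpa only [upperRank_mul_swap_succ hk] using h k j

lemma RankLe.mul_swap_of_first_diff {u w : Equiv.Perm ℕ} (hle : RankLe u w) {i q : ℕ}
    (hagree : ∀ m < i, u m = w m) (hiq : i < q) (hui : u i < u q) (huq : u q ≤ w i)
    (hmin : ∀ m, i < m → m < q → u m < u i ∨ w i < u m) : RankLe (u * Equiv.swap i q) w := by
  intro k j
  have hswap := upperRank_mul_swap (z := u) hiq k j
  rw [if_neg (by omega)] at hswap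
  split_ifs at hswap with hkj
  swap
  · have := hle k j
    omega
  obtain ⟨hik, hkq, hij, hjq⟩ := hkj
  have split_row (z : Equiv.Perm ℕ) (j' : ℕ) : upperRank z k j' =
      upperRank z i j' + (if j' ≤ z i then 1 else 0) + upperCount z (i + 1) k j' := by
    rw [upperRank_add_upperCount z (show i + 1 ≤ k by omega), upperRank_succ]
  have hcount : upperCount u (i + 1) k j = upperCount u (i + 1) k (w i + 1) := by
    unfold upperCount
    congr 1
    refine filter_congr fun m hm => ?_
    rw [mem_Ico] at hm
    have := hmin m (by omega) (by omega)
    omega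
  have hcount_le : upperCount u (i + 1) k (w i + 1) ≤ upperCount w (i + 1) k (w i + 1) := by
    have := hle k (w i + 1)
    rw [split_row u, split_row w, upperRank_congr hagree] at this
    split_ifs at this <;> omega
  have := upperCount_anti w (i + 1) k (show j ≤ w i + 1 by omega)
  have hu_row := split_row u j
  have hw_row := split_row w j
  rw [if_neg (by omega)] at hu_row
  rw [if_pos (by omega)] at hw_row
  have := upperRank_congr hagree j
  omega

def rankDefect (n : ℕ) (u w : Equiv.Perm ℕ) : ℕ :=
  ∑ p ∈ range (n + 1) ×ˢ range (n + 1), (upperRank w p.1 p.2 - upperRank u p.1 p.2)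

lemma rankDefect_mul_swap_lt {n i q : ℕ} {u w : Equiv.Perm ℕ} (hiq : i < q) (hqn : q < n)
    (hu : u i < u q) (huq : u q < n) (hle : RankLe (u * Equiv.swap i q) w) :
    rankDefect n (u * Equiv.swap i q) w < rankDefect n u w := by
  refine sum_lt_sum (fun p _ => Nat.sub_le_sub_left (rankLe_mul_swap hiq hu p.1 p.2) _)
    ⟨(i + 1, u q), by simp only [mem_product, mem_range]; omega, ?_⟩
  have hswap := upperRank_mul_swap (z := u) hiq (i + 1) (u q)
  rw [if_neg (by omega), if_pos (by omega)] at hswap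
  have := hle (i + 1) (u q)
  dsimp only
  omega

lemma exists_mul_swapS_rankLe {n : ℕ} {u w : SPlus} (hu : SupportedBelow n u)
    (hw : SupportedBelow n w) (hle : RankLe u.1 w.1) (hne : u ≠ w) :
    ∃ i q, i < q ∧ q < n ∧ u.1 i < u.1 q ∧ u.1 q < n ∧ RankLe (u * swapS i q).1 w.1 := by
  classical
  have hdiff : ∃ k, u.1 k ≠ w.1 k := by
    by_contra! h
    exact hne (Subtype.ext (Equiv.ext h))
  obtain ⟨i, hi, hagree⟩ : ∃ i, u.1 i ≠ w.1 i ∧ ∀ m < i, u.1 m = w.1 m :=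
    ⟨Nat.find hdiff, Nat.find_spec hdiff, fun m hm => not_not.mp (Nat.find_min hdiff hm)⟩
  have hin : i < n := by
    by_contra! hni
    exact hi ((hu i hni).trans (hw i hni).symm)
  have hui : u.1 i < w.1 i := by
    have := hle (i + 1) (u.1 i)
    rw [upperRank_succ, upperRank_succ, upperRank_congr hagree, if_pos le_rfl] at this
    by_contra! hwu
    rw [if_neg (by omega)] at this
    omega
  have hpos : ∃ m, i < m ∧ u.1 i < u.1 m ∧ u.1 m ≤ w.1 i := by
    refine ⟨u.1.symm (w.1 i), ?_, by simpa using hui, by simp⟩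
    rcases lt_trichotomy (u.1.symm (w.1 i)) i with hlt | heq | hgt
    · have := hagree _ hlt
      rw [Equiv.apply_symm_apply] at this
      exact absurd (w.1.injective this.symm) hlt.ne
    · have := u.1.apply_symm_apply (w.1 i)
      rw [heq] at this
      exact absurd this hi
    · exact hgt
  obtain ⟨q, ⟨hiq, huiq, huqw⟩, hqmin⟩ : ∃ q, (i < q ∧ u.1 i < u.1 q ∧ u.1 q ≤ w.1 i) ∧
      ∀ m < q, ¬(i < m ∧ u.1 i < u.1 m ∧ u.1 m ≤ w.1 i) :=
    ⟨Nat.find hpos, Nat.find_spec hpos, fun m hm => Nat.find_min hpos hm⟩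
  have hmin : ∀ m, i < m → m < q → u.1 m < u.1 i ∨ w.1 i < u.1 m := fun m him hmq => by
    have := hqmin m hmq
    have := u.1.injective.ne (show m ≠ i by omega)
    omega
  have hwin := hw.apply_lt hin
  have hqn : q < n := by
    by_contra! hnq
    have := hu q hnq
    omega
  exact ⟨i, q, hiq, hqn, huiq, by omega, hle.mul_swap_of_first_diff hagree hiq huiq huqw hmin⟩

lemma bruhatLe_of_rankLe {n : ℕ} {u w : SPlus} (hu : SupportedBelow n u)
    (hw : SupportedBelow n w) (hle : RankLe u.1 w.1) : BruhatLe u w := by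
  induction hd : rankDefect n u.1 w.1 using Nat.strong_induction_on generalizing u with
  | _ d ih =>
  by_cases heq : u = w
  · exact heq ▸ .refl
  obtain ⟨i, q, hiq, hqn, hui, huqn, hle'⟩ := exists_mul_swapS_rankLe hu hw hle heq
  refine .head ⟨lenS_lt_mul_swapS hiq hui, i, q, hiq.ne, rfl⟩
    (ih _ ?_ (hu.mul_swapS (by omega) hqn) hle' rfl)
  exact hd ▸ rankDefect_mul_swap_lt hiq hqn hui huqn hle'

lemma eq_w0_of_le_apply {n : ℕ} {w : SPlus} (hw : SupportedBelow n w)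
    (h : ∀ i < n, n - 1 - i ≤ w.1 i) : w = w0 n := by
  have himage : (range n).image w.1 = range n := by
    refine eq_of_subset_of_card_le (fun x hx => ?_) (card_image_of_injective _ w.1.injective).ge
    obtain ⟨m, hm, rfl⟩ := mem_image.mp hx
    exact mem_range.mpr (hw.apply_lt (mem_range.mp hm))
  have hsum : ∑ m ∈ range n, (n - 1 - m) = ∑ m ∈ range n, w.1 m :=
    calc ∑ m ∈ range n, (n - 1 - m) = ∑ m ∈ range n, m := sum_range_reflect (fun m => m) n
      _ = ∑ m ∈ (range n).image w.1, m := by rw [himage]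
      _ = ∑ m ∈ range n, w.1 m := sum_image fun a _ b _ hab => w.1.injective hab
  have heq := (sum_eq_sum_iff_of_le fun i hi => h i (mem_range.mp hi)).mp hsum
  refine Subtype.ext (Equiv.ext fun k => ?_)
  change w.1 k = w0fun n k
  by_cases hk : k < n
  · rw [← heq k (mem_range.mpr hk), w0fun, if_pos hk]
  · rw [hw k (not_lt.mp hk), w0fun, if_neg hk]

lemma exists_ascent_of_ne_w0 {n : ℕ} {v : SPlus} (hv : SupportedBelow n v) (hne : v ≠ w0 n) :
    ∃ i, i + 1 < n ∧ v.1 i < v.1 (i + 1) := by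
  by_contra! hdesc
  refine hne (eq_w0_of_le_apply hv fun i hi => ?_)
  have le_of_add_eq (d : ℕ) : ∀ i, i + d = n - 1 → d ≤ v.1 i := by
    induction d with
    | zero => simp
    | succ d ih =>
      intro i hid
      have := ih (i + 1) (by omega)
      have := hdesc i (by omega)
      have := v.1.injective.ne (show i + 1 ≠ i by omega)
      omega
  exact le_of_add_eq (n - 1 - i) i (by omega)

lemma lenS_one : lenS 1 = 0 := by
  rw [lenS_eq_card_inversionsBelow (n := 0) fun _ _ => rfl]
  simp [inversionsBelow]

lemma eq_one_of_bruhatLe_one {v : SPlus} (h : BruhatLe v 1) : v = 1 := by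
  rcases h.cases_tail with h | ⟨_, -, hlt, -⟩
  · exact h.symm
  · rw [lenS_one] at hlt
    exact absurd hlt (Nat.not_lt_zero _)

lemma bruhatLe_mul_sN {v : SPlus} {i : ℕ} (h : v.1 i < v.1 (i + 1)) : BruhatLe v (v * sN i) :=
  .single ⟨lenS_lt_mul_swapS (Nat.lt_succ_self i) h, i, i + 1, by omega, rfl⟩

lemma bruhatLe_of_bruhatLe_mul_sN {n i : ℕ} {v w : SPlus} (hv : SupportedBelow n v)
    (hw : SupportedBelow n w) (hasc : v.1 i < v.1 (i + 1))
    (h : BruhatLe (v * sN i) (w * sN i)) : BruhatLe v w := by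
  refine bruhatLe_of_rankLe hv hw ?_
  have hdesc : (v * sN i).1 (i + 1) < (v * sN i).1 i := by
    rwa [sN_eq_swapS, mul_swapS_apply, mul_swapS_apply, Equiv.swap_apply_right,
      Equiv.swap_apply_left]
  have := RankLe.lift (w := w.1) hdesc (rankLe_of_bruhatLe h)
  rwa [show (v * sN i).1 = v.1 * Equiv.swap i (i + 1) from rfl, Equiv.mul_swap_mul_self] at this

lemma specAt_X_inl (w : SPlus) (i : ℕ) :
    specAt w (X (Sum.inl i)) = X (Sum.inr (w.1 i)) := by
  simp [specAt]

lemma specAt_X_inr (w : SPlus) (j : ℕ) : specAt w (X (Sum.inr j)) = X (Sum.inr j) := by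
  simp [specAt]

lemma specAt_sx (w : SPlus) (i : ℕ) (P : DR) : specAt w (sx i P) = specAt (w * sN i) P := by
  rw [specAt, sx, specAt, rename_rename]
  congr 2
  funext x
  rcases x with j | j
  · simp only [Function.comp_apply, Sum.inl_injective.swap_apply, Sum.elim_inl]
    rfl
  · simp [Equiv.swap_apply_of_ne_of_ne]

lemma setXtoA_eq_specAt_one : setXtoA = specAt 1 := rfl

lemma eq_w0_of_specAt_ne_zero {D : SPlus → DR} (hD : DoubleSchubertFamily' D) {n : ℕ}
    {w : SPlus} (hw : SupportedBelow n w) (h : specAt w (D (w0 n)) ≠ 0) : w = w0 n := by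
  refine eq_w0_of_le_apply hw fun i hi => ?_
  by_contra! hlt
  refine h ?_
  rw [hD.1 n, map_prod]
  refine prod_eq_zero (i := (i, w.1 i)) ?_ ?_
  · simp only [mem_filter, mem_product, mem_range]
    exact ⟨⟨hi, hw.apply_lt hi⟩, by omega⟩
  · rw [map_sub, specAt_X_inl, specAt_X_inr, sub_self]

lemma specAt_ne_zero_of_lenS_lt_mul_sN {D : SPlus → DR} (hD : DoubleSchubertFamily' D)
    {v w : SPlus} {i : ℕ} (hlen : lenS v < lenS (v * sN i)) (h : specAt w (D v) ≠ 0) :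
    specAt w (D (v * sN i)) ≠ 0 ∨ specAt (w * sN i) (D (v * sN i)) ≠ 0 := by
  have hrel := congrArg (specAt w) (hD.2 v i hlen)
  rw [map_mul, map_sub, map_sub, specAt_X_inl, specAt_X_inl, specAt_sx] at hrel
  have hfac : (X (Sum.inr (w.1 i)) - X (Sum.inr (w.1 (i + 1))) : DR) ≠ 0 :=
    sub_ne_zero.mpr fun hX => by
      have := w.1.injective (Sum.inr_injective (X_injective hX))
      omega
  by_contra! hzero
  rw [hzero.1, hzero.2, sub_zero] at hrel
  exact mul_ne_zero hfac h hrel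

theorem bruhatLe_of_specAt_ne_zero {D : SPlus → DR} (hD : DoubleSchubertFamily' D) {n : ℕ}
    {v w : SPlus} (hv : SupportedBelow n v) (hw : SupportedBelow n w)
    (h : specAt w (D v) ≠ 0) : BruhatLe v w := by
  induction hd : n * n - lenS v using Nat.strong_induction_on generalizing v w with
  | _ d ih =>
  by_cases hv0 : v = w0 n
  · subst hv0
    obtain rfl := eq_w0_of_specAt_ne_zero hD hw h
    exact .refl
  obtain ⟨i, hin, hasc⟩ := exists_ascent_of_ne_w0 hv hv0
  have hvs : SupportedBelow n (v * sN i) := hv.mul_swapS (by omega) hin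
  have hlen : lenS v < lenS (v * sN i) := lenS_lt_mul_swapS (Nat.lt_succ_self i) hasc
  have hd' : n * n - lenS (v * sN i) < d := by
    have := lenS_le_mul_self hvs
    omega
  rcases specAt_ne_zero_of_lenS_lt_mul_sN hD hlen h with hvs_w | hvs_ws
  · exact (bruhatLe_mul_sN hasc).trans (ih _ hd' hvs hw hvs_w rfl)
  · exact bruhatLe_of_bruhatLe_mul_sN hv hw hasc
      (ih _ hd' hvs (hw.mul_swapS (by omega) hin) hvs_ws rfl)

/-- Vanishing property of double Schubert polynomials: if `v ≰ w` in Bruhat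
order then `𝔖_v(w a; a) = 0`; in particular `𝔖_v(a; a) = 0` for `v ≠ id`. -/
theorem doubleSchubert_vanishing (D : SPlus → DR) (hD : DoubleSchubertFamily' D) :
    (∀ v w : SPlus, ¬ BruhatLe v w → specAt w (D v) = 0) ∧
    (∀ v : SPlus, v ≠ 1 → setXtoA (D v) = 0) := by
  have vanishing (v w : SPlus) (hvw : ¬ BruhatLe v w) : specAt w (D v) = 0 := by
    obtain ⟨n₁, hv⟩ := exists_supportedBelow v
    obtain ⟨n₂, hw⟩ := exists_supportedBelow w
    by_contra h
    exact hvw (bruhatLe_of_specAt_ne_zero hD (hv.mono (le_max_left n₁ n₂))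
      (hw.mono (le_max_right n₁ n₂)) h)
  refine ⟨vanishing, fun v hv => ?_⟩
  rw [setXtoA_eq_specAt_one]
  exact vanishing v 1 fun h => hv (eq_one_of_bruhatLe_one h)
end
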